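/- arXiv:2001.03252 — 4 statements merged into one kernel-verified Lean document; each statement's English description precedes it below -/
import Mathlib

section
/- Let p_0, p_1, …, p_{2n−1} be 2n distinct points on a common circle in counterclockwise order. Then the maximum, over all perfect non-crossing matchings M of the points, of the minimum edge length of M equals the minimum over j ∈ {0,1,…,2n−1} of the maximum of dist(p_i, p_{i+1}) over the n consecutive boundary edges i = j, j+1, …, j+n−1 (indices modulo 2n). -/
noncomputable section

/-- The Euclidean plane. -/
abbrev Pt : Type := EuclideanSpace ℝ (Fin 2)

/-- The determinant of two plane vectors (twice the signed area). -/
def det2 (u v : Pt) : ℝ := u 0 * v 1 - u 1 * v 0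

/-- The points `p 0, p 1, …, p (N-1)` (indices in `ZMod N`) are distinct, lie on a common
circle, and are labeled in counterclockwise order: every triple of points with increasing
indices is positively (counterclockwise) oriented. -/
def OnCircleCCW (N : ℕ) (p : ZMod N → Pt) : Prop :=
  (∃ c : Pt, ∃ r : ℝ, 0 < r ∧ ∀ i, dist (p i) c = r) ∧
  Function.Injective p ∧
  (∀ i j k : ZMod N, i.val < j.val → j.val < k.val →
    0 < det2 (p j - p i) (p k - p i))

/-- `σ` encodes a perfect non-crossing matching of the points `p 0, …, p (N-1)`: it is a
fixed-point free involution of the indices, and the closed segments induced by two distinct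
edges are disjoint. -/
def IsNCM (N : ℕ) (p : ZMod N → Pt) (σ : ZMod N → ZMod N) : Prop :=
  (∀ i, σ (σ i) = i) ∧ (∀ i, σ i ≠ i) ∧
  (∀ i j : ZMod N, j ≠ i → j ≠ σ i →
    segment ℝ (p i) (p (σ i)) ∩ segment ℝ (p j) (p (σ j)) = ∅)

/-!
Every non-crossing perfect matching has a boundary edge among any `n` consecutive ones: the
`n + 1` points `p j, …, p (j + n)` contain a matched pair, since only `n - 1` points lie outside,
and the innermost chord nested inside that pair joins two neighbours. So no matching beats the
minimum over windows of the longest edge in the window, call it `V`.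

Conversely, call a boundary edge long if its length is at least `V`; every window contains one.
Cut the circle just after a long edge and colour each point by the first long edge at or after
it. The colour classes are runs of at most `n` points, which is exactly what is needed for a
non-crossing perfect matching joining different colours to exist (match two neighbouring points
of different colours, one of them in a largest class, and recurse). Each chord then has a long
edge on both of its arcs, and on the arc away from the centre every edge is at most as long as
the chord.
-/

lemma det2_sub_cyclic (x y z : Pt) : det2 (y - x) (z - x) = det2 (z - y) (x - y) := by
  simp only [det2, PiLp.sub_apply]; ring

lemma det2_sub_swap (x y z : Pt) : det2 (x - y) (z - y) = -det2 (y - x) (z - x) := by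
  simp only [det2, PiLp.sub_apply]; ring

lemma det2_comm (u v : Pt) : det2 u v = -det2 v u := by
  simp only [det2]; ring

lemma det2_sub_self (x y : Pt) : det2 (y - x) (y - x) = 0 := by
  simp only [det2]; ring

lemma det2_sub_smul_add_smul (w x y z : Pt) {s t : ℝ} (hst : s + t = 1) :
    det2 w (s • y + t • z - x) = s * det2 w (y - x) + t * det2 w (z - x) := by
  simp only [det2, PiLp.sub_apply, PiLp.add_apply, PiLp.smul_apply, smul_eq_mul]
  linear_combination (w 0 * x 1 - w 1 * x 0) * hst

lemma segment_inter_eq_empty_of_det2_mul_pos {A B C D : Pt}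
    (h : 0 < det2 (B - A) (C - A) * det2 (B - A) (D - A)) :
    segment ℝ A B ∩ segment ℝ C D = ∅ := by
  refine Set.eq_empty_of_forall_notMem ?_
  rintro x ⟨⟨s, t, -, -, hst, hAB⟩, ⟨s', t', hs', ht', hst', hCD⟩⟩
  have h0 : s' * det2 (B - A) (C - A) + t' * det2 (B - A) (D - A) = 0 := by
    rw [← det2_sub_smul_add_smul _ _ _ _ hst', hCD, ← hAB, det2_sub_smul_add_smul _ _ _ _ hst,
      sub_self, det2_sub_self]
    simp [det2]
  -- a convex combination of two reals of the same strict sign does not vanish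
  have h1 := congrArg (· * det2 (B - A) (C - A)) h0
  have h2 := congrArg (· * det2 (B - A) (D - A)) h0
  simp only [zero_mul] at h1 h2
  nlinarith [mul_nonneg hs' (sq_nonneg (det2 (B - A) (C - A))),
    mul_nonneg ht' (sq_nonneg (det2 (B - A) (D - A)))]

lemma div_sub_nonneg_of_mul_neg {a b : ℝ} (h : a * b < 0) : 0 ≤ a / (a - b) := by
  rcases mul_neg_iff.mp h with ⟨ha, hb⟩ | ⟨ha, hb⟩
  · exact div_nonneg ha.le (by linarith)
  · exact div_nonneg_of_nonpos ha.le (by linarith)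

lemma ne_of_mul_neg {a b : ℝ} (h : a * b < 0) : a ≠ b := by
  rintro rfl; nlinarith [mul_self_nonneg a]

lemma div_sub_add_div_sub {a b : ℝ} (h : a ≠ b) : a / (a - b) + b / (b - a) = 1 := by
  rw [← neg_sub a b, div_neg, ← sub_eq_add_neg, ← sub_div, div_self (sub_ne_zero.mpr h)]

lemma smul_add_smul_eq_inv_smul {a b : ℝ} (h : a ≠ b) (x y : Pt) :
    (a / (a - b)) • x + (b / (b - a)) • y = (a - b)⁻¹ • (a • x - b • y) := by
  have := sub_ne_zero.mpr h
  have := sub_ne_zero.mpr h.symm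
  match_scalars
  · field_simp
  · field_simp; ring

/-- Both sides are `det2 (D - C) (B - A)` times the intersection point of the lines `AB`
and `CD`. -/
lemma det2_smul_sub_det2_smul (A B C D : Pt) :
    det2 (D - C) (B - C) • A - det2 (D - C) (A - C) • B =
      -(det2 (B - A) (D - A) • C - det2 (B - A) (C - A) • D) := by
  ext i; fin_cases i <;> · simp [det2]; ring

lemma segment_inter_nonempty_of_det2_mul_neg {A B C D : Pt}
    (hAB : det2 (B - A) (C - A) * det2 (B - A) (D - A) < 0)
    (hCD : det2 (D - C) (A - C) * det2 (D - C) (B - C) < 0) :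
    (segment ℝ A B ∩ segment ℝ C D).Nonempty := by
  have hΔ : det2 (D - C) (B - C) - det2 (D - C) (A - C) =
      -(det2 (B - A) (D - A) - det2 (B - A) (C - A)) := by
    simp only [det2, PiLp.sub_apply]; ring
  rw [mul_comm] at hAB hCD
  refine ⟨_, ⟨_, _, div_sub_nonneg_of_mul_neg hCD, div_sub_nonneg_of_mul_neg (by linarith),
      div_sub_add_div_sub (ne_of_mul_neg hCD), ?_⟩,
    ⟨_, _, div_sub_nonneg_of_mul_neg hAB, div_sub_nonneg_of_mul_neg (by linarith),
      div_sub_add_div_sub (ne_of_mul_neg hAB), rfl⟩⟩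
  rw [smul_add_smul_eq_inv_smul (ne_of_mul_neg hCD),
    smul_add_smul_eq_inv_smul (ne_of_mul_neg hAB), hΔ,
    det2_smul_sub_det2_smul, inv_neg, neg_smul_neg]

lemma dist_sq_eq_coords (x y : Pt) : dist x y ^ 2 = (x 0 - y 0) ^ 2 + (x 1 - y 1) ^ 2 := by
  simp [EuclideanSpace.dist_sq_eq, Fin.sum_univ_two, Real.dist_eq, sq_abs]

lemma dist_midpoint_le_of_det2 {c A B X : Pt} {r : ℝ} (hA : dist A c = r) (hB : dist B c = r)
    (hX : dist X c = r) (hAB : A ≠ B) (hXs : det2 (B - A) (X - A) ≤ 0)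
    (hc : 0 ≤ det2 (B - A) (c - A)) :
    dist X (midpoint ℝ A B) ≤ dist A (midpoint ℝ A B) := by
  set M := midpoint ℝ A B with hM_def
  have hM : ∀ i, M i = (A i + B i) / 2 := fun i => by
    rw [hM_def, midpoint_eq_smul_add]; simp; ring
  have hB2 : dist B c ^ 2 = dist A c ^ 2 := by rw [hA, hB]
  have hX2 : dist X c ^ 2 = dist A c ^ 2 := by rw [hA, hX]
  have key : dist A B ^ 2 * (dist A M ^ 2 - dist X M ^ 2) =
      -2 * det2 (B - A) (c - A) * det2 (B - A) (X - A) := by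
    simp only [dist_sq_eq_coords, hM, det2, PiLp.sub_apply] at hB2 hX2 ⊢
    linear_combination (-((A 0 - B 0) ^ 2 + (A 1 - B 1) ^ 2)) * hX2 +
      ((X 0 - A 0) * (B 0 - A 0) + (X 1 - A 1) * (B 1 - A 1)) * hB2
  have hAB2 : 0 < dist A B ^ 2 := by positivity [dist_pos.mpr hAB]
  have : 0 ≤ dist A M ^ 2 - dist X M ^ 2 :=
    (mul_nonneg_iff_of_pos_left hAB2).mp (by rw [key]; nlinarith)
  exact (sq_le_sq₀ dist_nonneg dist_nonneg).mp (by linarith)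

lemma dist_le_dist_of_det2_nonpos {c A B P Q : Pt} {r : ℝ} (hA : dist A c = r)
    (hB : dist B c = r) (hP : dist P c = r) (hQ : dist Q c = r) (hAB : A ≠ B)
    (hPs : det2 (B - A) (P - A) ≤ 0) (hQs : det2 (B - A) (Q - A) ≤ 0)
    (hc : 0 ≤ det2 (B - A) (c - A)) : dist P Q ≤ dist A B :=
  calc dist P Q ≤ dist P (midpoint ℝ A B) + dist Q (midpoint ℝ A B) :=
        dist_triangle_right _ _ _
    _ ≤ dist A (midpoint ℝ A B) + dist A (midpoint ℝ A B) :=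
      add_le_add (dist_midpoint_le_of_det2 hA hB hP hAB hPs hc)
        (dist_midpoint_le_of_det2 hA hB hQ hAB hQs hc)
    _ = dist A B := by rw [dist_left_midpoint]; norm_num; ring

lemma min_dist_le_dist_of_det2 {c A B P Q P' Q' : Pt} {r : ℝ} (hA : dist A c = r)
    (hB : dist B c = r) (hP : dist P c = r) (hQ : dist Q c = r) (hP' : dist P' c = r)
    (hQ' : dist Q' c = r) (hAB : A ≠ B) (hPs : det2 (B - A) (P - A) ≤ 0)
    (hQs : det2 (B - A) (Q - A) ≤ 0) (hP's : 0 ≤ det2 (B - A) (P' - A))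
    (hQ's : 0 ≤ det2 (B - A) (Q' - A)) : min (dist P Q) (dist P' Q') ≤ dist A B := by
  rcases le_total 0 (det2 (B - A) (c - A)) with hc | hc
  · exact (min_le_left _ _).trans (dist_le_dist_of_det2_nonpos hA hB hP hQ hAB hPs hQs hc)
  · refine (min_le_right _ _).trans ?_
    rw [dist_comm A B]
    apply dist_le_dist_of_det2_nonpos hB hA hP' hQ' hAB.symm <;> rw [det2_sub_swap] <;> linarith

/-- The orientation condition of `OnCircleCCW` for `q 0, …, q (N - 1)`, indexed by `ℕ` so that
it can be imposed on a rotation `k ↦ p (a + k)`. -/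
def IsCCWChain (N : ℕ) (q : ℕ → Pt) : Prop :=
  ∀ i j k, i < j → j < k → k < N → 0 < det2 (q j - q i) (q k - q i)

lemma ZMod.val_add_natCast_eq_or {N : ℕ} [NeZero N] (a : ZMod N) {k : ℕ} (hk : k < N) :
    (a + k).val = a.val + k ∨ (a + k).val + N = a.val + k := by
  rcases lt_or_ge (a.val + k) N with h | h
  · left
    rw [ZMod.val_add_of_lt (by rwa [ZMod.val_natCast_of_lt hk]), ZMod.val_natCast_of_lt hk]
  · right
    have := ZMod.val_add_val_of_le (a := a) (b := k) (by rwa [ZMod.val_natCast_of_lt hk])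
    rwa [ZMod.val_natCast_of_lt hk, eq_comm] at this

lemma isCCWChain_rotate {N : ℕ} [NeZero N] {p : ZMod N → Pt}
    (hp : ∀ i j k : ZMod N, i.val < j.val → j.val < k.val → 0 < det2 (p j - p i) (p k - p i))
    (a : ZMod N) : IsCCWChain N (fun k => p (a + k)) := by
  intro i j k hij hjk hk
  dsimp only
  have hi := ZMod.val_add_natCast_eq_or a (hij.trans (hjk.trans hk))
  have hj := ZMod.val_add_natCast_eq_or a (hjk.trans hk)
  have hk' := ZMod.val_add_natCast_eq_or a hk
  have := ZMod.val_lt (a + (i : ZMod N))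
  have := ZMod.val_lt (a + (j : ZMod N))
  have := ZMod.val_lt (a + (k : ZMod N))
  -- a rotation of the indices keeps their cyclic order
  rcases (by omega : ((a + i).val < (a + j).val ∧ (a + j).val < (a + k).val) ∨
      ((a + k).val < (a + i).val ∧ (a + i).val < (a + j).val) ∨
      ((a + j).val < (a + k).val ∧ (a + k).val < (a + i).val)) with h | h | h
  · exact hp _ _ _ h.1 h.2
  · rw [← det2_sub_cyclic]; exact hp _ _ _ h.1 h.2
  · rw [det2_sub_cyclic]; exact hp _ _ _ h.1 h.2

namespace IsCCWChain

variable {N : ℕ} {q : ℕ → Pt} {x y z w : ℕ}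

lemma det2_neg (hq : IsCCWChain N q) (hxy : x < y) (hyz : y < z) (hz : z < N) :
    det2 (q z - q x) (q y - q x) < 0 := by
  rw [det2_comm, neg_neg_iff_pos]; exact hq x y z hxy hyz hz

lemma det2_pos_of_lt_left (hq : IsCCWChain N q) (hyx : y < x) (hxz : x < z) (hz : z < N) :
    0 < det2 (q z - q x) (q y - q x) := by
  rw [← det2_sub_cyclic]; exact hq y x z hyx hxz hz

lemma det2_pos_of_lt_right (hq : IsCCWChain N q) (hxz : x < z) (hzy : z < y) (hy : y < N) :
    0 < det2 (q z - q x) (q y - q x) :=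
  hq x z y hxz hzy hy

lemma det2_pos_of_not_between (hq : IsCCWChain N q) (hxz : x < z) (hz : z < N) (hy : y < N)
    (hyx : y ≠ x) (hyz : y ≠ z) (hout : ¬(x < y ∧ y < z)) :
    0 < det2 (q z - q x) (q y - q x) := by
  rcases lt_or_gt_of_ne hyx with h | h
  · exact hq.det2_pos_of_lt_left h hxz hz
  · exact hq.det2_pos_of_lt_right hxz (by omega) hy

lemma det2_nonpos (hq : IsCCWChain N q) (hxy : x ≤ y) (hyz : y ≤ z) (hz : z < N) :
    det2 (q z - q x) (q y - q x) ≤ 0 := by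
  rcases hxy.eq_or_lt with rfl | hxy
  · simp [det2]
  rcases hyz.eq_or_lt with rfl | hyz
  · rw [det2_sub_self]
  exact (hq.det2_neg hxy hyz hz).le

lemma det2_nonneg (hq : IsCCWChain N q) (hxz : x < z) (hz : z < N) (hy : y < N)
    (hout : y ≤ x ∨ z ≤ y) :
    0 ≤ det2 (q z - q x) (q y - q x) := by
  rcases eq_or_ne y x with rfl | hyx
  · simp [det2]
  rcases eq_or_ne y z with rfl | hyz
  · rw [det2_sub_self]
  exact (hq.det2_pos_of_not_between hxz hz hy hyx hyz (by omega)).le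

lemma segment_inter_nonempty (hq : IsCCWChain N q) (hxy : x < y) (hyz : y < z) (hzw : z < w)
    (hw : w < N) : (segment ℝ (q x) (q z) ∩ segment ℝ (q y) (q w)).Nonempty :=
  segment_inter_nonempty_of_det2_mul_neg
    (mul_neg_of_neg_of_pos (hq.det2_neg hxy hyz (hzw.trans hw))
      (hq.det2_pos_of_lt_right (hxy.trans hyz) hzw hw))
    (mul_neg_of_pos_of_neg (hq.det2_pos_of_lt_left hxy (hyz.trans hzw) hw)
      (hq.det2_neg hyz hzw hw))

lemma segment_inter_eq_empty (hq : IsCCWChain N q) (hxz : x < z) (hz : z < N) (hy : y < N)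
    (hw : w < N) (hyx : y ≠ x) (hyz : y ≠ z) (hwx : w ≠ x) (hwz : w ≠ z)
    (hyw : (x < y ∧ y < z) ↔ (x < w ∧ w < z)) :
    segment ℝ (q x) (q z) ∩ segment ℝ (q y) (q w) = ∅ := by
  apply segment_inter_eq_empty_of_det2_mul_pos
  by_cases hin : x < y ∧ y < z
  · exact mul_pos_of_neg_of_neg (hq.det2_neg hin.1 hin.2 hz)
      (hq.det2_neg (hyw.mp hin).1 (hyw.mp hin).2 hz)
  · exact mul_pos (hq.det2_pos_of_not_between hxz hz hy hyx hyz hin)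
      (hq.det2_pos_of_not_between hxz hz hw hwx hwz (mt hyw.mpr hin))

end IsCCWChain

open Finset

section Matching

variable {α : Type*} [LinearOrder α]

structure IsNoncrossingMatching (S : Finset α) (σ : α → α) : Prop where
  mapsTo : ∀ x ∈ S, σ x ∈ S
  involutive : ∀ x ∈ S, σ (σ x) = x
  ne_self : ∀ x ∈ S, σ x ≠ x
  /-- a chord `{x, σ x}` with `σ x < x` is covered by the field at `σ x` -/
  nested : ∀ x ∈ S, ∀ y ∈ S, x < y → y < σ x → x < σ y ∧ σ y < σ x

lemma exists_adjacent_of_not_iff (S : Finset α) (P : α → Prop)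
    (h₁ : ∃ x ∈ S, P x) (h₂ : ∃ x ∈ S, ¬P x) :
    ∃ a ∈ S, ∃ b ∈ S, a < b ∧ (∀ z ∈ S, ¬(a < z ∧ z < b)) ∧ ¬(P a ↔ P b) := by
  classical
  obtain ⟨x₁, hx₁, hP₁⟩ := h₁
  obtain ⟨x₂, hx₂, hP₂⟩ := h₂
  obtain ⟨m, hmS, hm⟩ := S.exists_min_image id ⟨x₁, hx₁⟩
  obtain ⟨b, hb, hbmin⟩ := exists_min_image {w ∈ S | ¬(P w ↔ P m)} id <| by
    by_cases hPm : P m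
    · exact ⟨x₂, mem_filter.mpr ⟨hx₂, by tauto⟩⟩
    · exact ⟨x₁, mem_filter.mpr ⟨hx₁, by tauto⟩⟩
  obtain ⟨hbS, hbP⟩ := mem_filter.mp hb
  have hbelow : ∀ w ∈ S, w < b → (P w ↔ P m) := fun w hw hwb =>
    not_not.mp fun h => (hbmin w (mem_filter.mpr ⟨hw, h⟩)).not_gt hwb
  have hmb : m < b := lt_of_le_of_ne (hm b hbS) (by rintro rfl; exact hbP Iff.rfl)
  obtain ⟨a, ha, hamax⟩ :=
    exists_max_image {w ∈ S | w < b} id ⟨m, mem_filter.mpr ⟨hmS, hmb⟩⟩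
  obtain ⟨haS, hab⟩ := mem_filter.mp ha
  refine ⟨a, haS, b, hbS, hab, fun z hz ⟨haz, hzb⟩ => ?_, ?_⟩
  · exact (hamax z (mem_filter.mpr ⟨hz, hzb⟩)).not_gt haz
  · rw [hbelow a haS hab]; tauto

lemma IsNoncrossingMatching.of_erase_erase {S : Finset α} {σ : α → α} {a b : α}
    (hσ : IsNoncrossingMatching ((S.erase a).erase b) σ) (ha : a ∈ S) (hb : b ∈ S)
    (hab : a < b)     (hadj : ∀ z ∈ S, ¬(a < z ∧ z < b)) :
    IsNoncrossingMatching S (fun x => if x = a then b else if x = b then a else σ x) := by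
  have hmem : ∀ {x}, x ∈ (S.erase a).erase b ↔ x ≠ b ∧ x ≠ a ∧ x ∈ S := by simp
  have hσmem : ∀ {x}, x ∈ S → x ≠ a → x ≠ b → σ x ≠ b ∧ σ x ≠ a ∧ σ x ∈ S :=
    fun hx hxa hxb => hmem.mp (hσ.mapsTo _ (hmem.mpr ⟨hxb, hxa, hx⟩))
  have hba : b ≠ a := hab.ne'
  refine ⟨fun x hx => ?_, fun x hx => ?_, fun x hx => ?_, fun x hx y hy hxy hyx => ?_⟩
  · split_ifs with h₁ h₂
    exacts [hb, ha, (hσmem hx h₁ h₂).2.2]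
  · by_cases h₁ : x = a
    · simp [h₁, hba]
    by_cases h₂ : x = b
    · simp [h₂, hba]
    obtain ⟨h₃, h₄, -⟩ := hσmem hx h₁ h₂
    simp [h₁, h₂, h₃, h₄, hσ.involutive x (hmem.mpr ⟨h₂, h₁, hx⟩)]
  · split_ifs with h₁ h₂
    · exact h₁ ▸ hba
    · exact h₂ ▸ hba.symm
    · exact hσ.ne_self x (hmem.mpr ⟨h₂, h₁, hx⟩)
  · by_cases h₁ : x = a
    · subst h₁
      rw [if_pos rfl] at hyx
      exact absurd ⟨hxy, hyx⟩ (hadj y hy)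
    by_cases h₂ : x = b
    · subst h₂
      rw [if_neg hba, if_pos rfl] at hyx
      exact absurd (hxy.trans hyx) (lt_asymm hab)
    obtain ⟨h₃, h₄, h₅⟩ := hσmem hx h₁ h₂
    simp only [if_neg h₁, if_neg h₂] at hyx ⊢
    by_cases hya : y = a
    · subst hya
      rw [if_pos rfl]
      exact ⟨hxy.trans hab,
        lt_of_le_of_ne (not_lt.mp fun h => hadj _ h₅ ⟨hyx, h⟩) h₃.symm⟩
    by_cases hyb : y = b
    · subst hyb
      rw [if_neg hba, if_pos rfl]
      exact ⟨lt_of_le_of_ne (not_lt.mp fun h => hadj x hx ⟨h, hxy⟩) h₁, hab.trans hyx⟩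
    simp only [if_neg hya, if_neg hyb]
    exact hσ.nested x (hmem.mpr ⟨h₂, h₁, hx⟩) y (hmem.mpr ⟨hyb, hya, hy⟩) hxy hyx

lemma card_filter_erase_erase_le {β : Type*} [DecidableEq β] (col : α → β) {S : Finset α}
    {a b : α} {m : ℕ} (hS : S.card = 2 * m + 2) (ha : a ∈ S) (hb : b ∈ S)
    (hab : col a ≠ col b)
    (hmax : ∀ x ∈ S, #{y ∈ S | col y = col x} ≤ #{y ∈ S | col y = col a})
    (hm : #{y ∈ S | col y = col a} ≤ m + 1) :
    ∀ x ∈ (S.erase a).erase b, #{y ∈ (S.erase a).erase b | col y = col x} ≤ m := by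
  intro x hx
  have hxS : x ∈ S := mem_of_mem_erase (mem_of_mem_erase hx)
  set F := {y ∈ S | col y = col x}
  have hsub : {y ∈ (S.erase a).erase b | col y = col x} ⊆ (F.erase a).erase b := by
    intro y; simp only [F, mem_filter, mem_erase]; tauto
  refine (card_le_card hsub).trans ?_
  have hF : #F ≤ #{y ∈ S | col y = col a} := hmax x hxS
  by_cases hxa : col x = col a
  · have haF : a ∈ F := mem_filter.mpr ⟨ha, hxa.symm⟩
    have := card_erase_of_mem haF
    have := card_erase_le (s := F.erase a) (a := b)
    omega
  by_cases hxb : col x = col b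
  · have hbF : b ∈ F.erase a :=
      mem_erase.mpr ⟨fun h => hab (h ▸ rfl), mem_filter.mpr ⟨hb, hxb.symm⟩⟩
    have := card_erase_of_mem hbF
    have := card_erase_le (s := F) (a := a)
    omega
  -- the classes of `x`, of `a` and of `b` are disjoint, and that of `a` is at least as large
  have hsub' : (F.erase a).erase b ⊆ {y ∈ S | ¬col y = col a}.erase b := by
    intro y
    simp only [F, mem_filter, mem_erase]
    exact fun h => ⟨h.1, h.2.2.1, fun h' => hxa (h.2.2.2 ▸ h')⟩
  have h₁ := card_le_card hsub'
  have h₂ := card_erase_of_mem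
    (mem_filter.mpr ⟨hb, Ne.symm hab⟩ : b ∈ {y ∈ S | ¬col y = col a})
  have h₃ := card_filter_add_card_filter_not (s := S) (fun y => col y = col a)
  have h₄ := card_le_card (erase_subset b (F.erase a))
  have h₅ := card_le_card (erase_subset a F)
  omega

theorem IsNoncrossingMatching.exists_of_card_filter_le {β : Type*} [DecidableEq β]
    (col : α → β) (m : ℕ) (S : Finset α) (hS : S.card = 2 * m)
    (hcol : ∀ x ∈ S, #{y ∈ S | col y = col x} ≤ m) :
    ∃ σ, IsNoncrossingMatching S σ ∧ ∀ x ∈ S, col (σ x) ≠ col x := by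
  induction m generalizing S with
  | zero =>
    obtain rfl : S = ∅ := card_eq_zero.mp hS
    exact ⟨id, ⟨by simp, by simp, by simp, by simp⟩, by simp⟩
  | succ m ih =>
    obtain ⟨x₀, hx₀, hmax⟩ :=
      S.exists_max_image (fun x => #{y ∈ S | col y = col x}) (card_pos.mp (by omega))
    obtain ⟨a, ha, b, hb, hab, hadj, hcol_ab⟩ :=
      exists_adjacent_of_not_iff S (col · = col x₀) ⟨x₀, hx₀, rfl⟩ <| by
        by_contra! h
        have := filter_true_of_mem h ▸ hcol x₀ hx₀
        omega
    have hne : col a ≠ col b := fun h => hcol_ab (by rw [h])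
    have hS' : ((S.erase a).erase b).card = 2 * m := by
      rw [card_erase_of_mem (mem_erase.mpr ⟨hab.ne', hb⟩), card_erase_of_mem ha]; omega
    have hcol' :
        ∀ x ∈ (S.erase a).erase b, #{y ∈ (S.erase a).erase b | col y = col x} ≤ m := by
      rcases (show col a = col x₀ ∨ col b = col x₀ by tauto) with h | h
      · exact card_filter_erase_erase_le col (by omega) ha hb hne
          (fun x hx => (hmax x hx).trans_eq (by rw [h])) (h ▸ hcol x₀ hx₀)
      · rw [erase_right_comm]
        exact card_filter_erase_erase_le col (by omega) hb ha hne.symm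
          (fun x hx => (hmax x hx).trans_eq (by rw [h])) (h ▸ hcol x₀ hx₀)
    obtain ⟨σ, hσ, hσcol⟩ := ih _ hS' hcol'
    refine ⟨_, hσ.of_erase_erase ha hb hab hadj, fun x hx => ?_⟩
    split_ifs with h₁ h₂
    · exact h₁ ▸ hne.symm
    · exact h₂ ▸ hne
    · exact hσcol x (by simp [*])

end Matching

section Nat

variable {n N : ℕ} {σ : ℕ → ℕ}

lemma IsNoncrossingMatching.exists_succ_eq (hσ : IsNoncrossingMatching (range N) σ) {x : ℕ}
    (hx : x < N) (hxσ : x < σ x) : ∃ s, x ≤ s ∧ s < σ x ∧ σ s = s + 1 := by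
  induction h : σ x - x using Nat.strong_induction_on generalizing x with
  | _ d ih =>
    rcases (Nat.succ_le_of_lt hxσ).eq_or_lt with h' | h'
    · exact ⟨x, le_rfl, hxσ, h'.symm⟩
    have hσx := mem_range.mp (hσ.mapsTo x (mem_range.mpr hx))
    have hy : x + 1 ∈ range N := mem_range.mpr (by omega)
    -- the partner of `x + 1` lies strictly inside the chord `{x, σ x}`
    obtain ⟨h₁, h₂⟩ := hσ.nested x (mem_range.mpr hx) (x + 1) hy (by omega) h'
    have h₃ : x + 1 < σ (x + 1) := lt_of_le_of_ne h₁ (hσ.ne_self _ hy).symm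
    obtain ⟨s, hs₁, hs₂, hs⟩ := ih _ (by omega) (mem_range.mp hy) h₃ rfl
    exact ⟨s, by omega, by omega, hs⟩

lemma IsNoncrossingMatching.exists_lt_le (hσ : IsNoncrossingMatching (range (2 * n)) σ)
    (hn : 0 < n) : ∃ x, x < σ x ∧ σ x ≤ n := by
  by_contra! h
  have hmaps : ∀ x ∈ range (n + 1), σ x ∈ Ico (n + 1) (2 * n) := by
    intro x hx
    have hxS : x ∈ range (2 * n) := mem_range.mpr (by have := mem_range.mp hx; omega)
    have hσx := mem_range.mp (hσ.mapsTo x hxS)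
    rw [mem_Ico]
    rcases lt_or_gt_of_ne (hσ.ne_self x hxS) with hlt | hlt
    · have := h (σ x) (by rwa [hσ.involutive x hxS])
      rw [hσ.involutive x hxS] at this
      have := mem_range.mp hx
      omega
    · have := h x hlt
      omega
  have := card_le_card_of_injOn σ hmaps fun x hx y hy hxy => by
    have hx' : x ∈ range (2 * n) := mem_range.mpr (by have := mem_range.mp hx; omega)
    have hy' : y ∈ range (2 * n) := mem_range.mpr (by have := mem_range.mp hy; omega)
    rw [← hσ.involutive x hx', hxy, hσ.involutive y hy']
  simp only [card_range, Nat.card_Ico] at this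
  omega

lemma IsNoncrossingMatching.exists_lt_succ_eq (hσ : IsNoncrossingMatching (range (2 * n)) σ)
    (hn : 0 < n) : ∃ s < n, σ s = s + 1 := by
  obtain ⟨x, hx, hxn⟩ := hσ.exists_lt_le hn
  obtain ⟨s, -, hs, hσs⟩ := hσ.exists_succ_eq (by omega) hx
  exact ⟨s, by omega, hσs⟩

/-- `0` when no `t ≥ x` satisfies `P`. -/
def firstAtOrAfter (P : ℕ → Prop) (x : ℕ) : ℕ := sInf {t | x ≤ t ∧ P t}

variable {P : ℕ → Prop} {x y t : ℕ}

lemma firstAtOrAfter_spec (ht : x ≤ t) (hP : P t) :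
    x ≤ firstAtOrAfter P x ∧ P (firstAtOrAfter P x) :=
  Nat.sInf_mem (s := {t | x ≤ t ∧ P t}) ⟨t, ht, hP⟩

lemma firstAtOrAfter_le (ht : x ≤ t) (hP : P t) : firstAtOrAfter P x ≤ t :=
  Nat.sInf_le ⟨ht, hP⟩

lemma firstAtOrAfter_eq_of_le (ht : x ≤ t) (hP : P t) (hxy : x ≤ y)
    (hy : y ≤ firstAtOrAfter P x) : firstAtOrAfter P y = firstAtOrAfter P x := by
  obtain ⟨h₁, h₂⟩ := firstAtOrAfter_spec ht hP
  obtain ⟨h₃, h₄⟩ := firstAtOrAfter_spec hy h₂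
  exact le_antisymm (firstAtOrAfter_le hy h₂) (firstAtOrAfter_le (hxy.trans h₃) h₄)

lemma exists_isNoncrossingMatching_of_forall_exists_lt (hP : ∀ x, ∃ t < n, P (x + t)) :
    ∃ σ, IsNoncrossingMatching (range (2 * n)) σ ∧
      ∀ x < 2 * n, x < σ x → ∃ s, x ≤ s ∧ s < σ x ∧ P s := by
  have hcol : ∀ x, x ≤ firstAtOrAfter P x ∧ P (firstAtOrAfter P x) ∧
      firstAtOrAfter P x < x + n := fun x => by
    obtain ⟨t, ht, hPt⟩ := hP x
    exact ⟨(firstAtOrAfter_spec (Nat.le_add_right x t) hPt).1,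
      (firstAtOrAfter_spec (Nat.le_add_right x t) hPt).2,
      (firstAtOrAfter_le (Nat.le_add_right x t) hPt).trans_lt (by omega)⟩
  -- a colour class is a run of points `y` with distinct offsets `firstAtOrAfter P y - y < n`
  obtain ⟨σ, hσ, hσcol⟩ :=
    IsNoncrossingMatching.exists_of_card_filter_le (firstAtOrAfter P) n (range (2 * n))
      (card_range _) fun x _ => by
      refine (card_le_card_of_injOn (fun y => firstAtOrAfter P y - y) (t := range n)
        (fun y _ => mem_range.mpr (by have := hcol y; dsimp only; omega))
        fun y hy z hz hyz => ?_).trans (card_range n).le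
      simp only [mem_coe, mem_filter] at hy hz
      dsimp only at hyz
      have := hcol y
      have := hcol z
      omega
  refine ⟨σ, hσ, fun x hx hxσ => ⟨firstAtOrAfter P x, (hcol x).1, ?_, (hcol x).2.1⟩⟩
  by_contra! h
  exact hσcol x (mem_range.mpr hx) (firstAtOrAfter_eq_of_le (hcol x).1 (hcol x).2.1 hxσ.le h)

end Nat

namespace IsCCWChain

variable {N : ℕ} {q : ℕ → Pt}

lemma segment_inter_eq_empty_of_isNoncrossingMatching {σ : ℕ → ℕ} (hq : IsCCWChain N q)
    (hσ : IsNoncrossingMatching (range N) σ) {x y : ℕ} (hx : x < N) (hy : y < N)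
    (hyx : y ≠ x) (hyσ : y ≠ σ x) :
    segment ℝ (q x) (q (σ x)) ∩ segment ℝ (q y) (q (σ y)) = ∅ := by
  have hy' := mem_range.mpr hy
  have key : ∀ x < N, x < σ x → y ≠ x → y ≠ σ x →
      segment ℝ (q x) (q (σ x)) ∩ segment ℝ (q y) (q (σ y)) = ∅ := by
    intro x hx hxσ hyx hyσ
    have hx' := mem_range.mpr hx
    refine hq.segment_inter_eq_empty hxσ (mem_range.mp (hσ.mapsTo x hx')) hy
      (mem_range.mp (hσ.mapsTo y hy')) hyx hyσ
      (fun h => hyσ (by rw [← h, hσ.involutive y hy']))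
      (fun h => hyx (by rw [← hσ.involutive y hy', h, hσ.involutive x hx']))
      ⟨fun h => ?_, fun h => ?_⟩
    · exact hσ.nested x hx' y hy' h.1 h.2
    · have := hσ.nested x hx' (σ y) (hσ.mapsTo y hy') h.1 h.2
      rwa [hσ.involutive y hy'] at this
  have hx' := mem_range.mpr hx
  rcases lt_or_gt_of_ne (hσ.ne_self x hx') with h | h
  · have := key (σ x) (mem_range.mp (hσ.mapsTo x hx')) (by rwa [hσ.involutive x hx'])
      hyσ (by rwa [hσ.involutive x hx'])
    rwa [hσ.involutive x hx', segment_symm] at this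
  · exact key x hx h hyx hyσ

lemma le_dist_of_edges {c : Pt} {r V : ℝ} (hq : IsCCWChain N q)
    (hcirc : ∀ k, dist (q k) c = r) (hlast : V ≤ dist (q (N - 1)) (q 0)) {x s z : ℕ}
    (hxs : x ≤ s) (hsz : s < z) (hz : z < N) (hs : V ≤ dist (q s) (q (s + 1)))
    (hxz : q x ≠ q z) : V ≤ dist (q x) (q z) :=
  (le_min hs hlast).trans <| min_dist_le_dist_of_det2 (hcirc x) (hcirc z) (hcirc s) (hcirc _)
    (hcirc _) (hcirc 0) hxz (hq.det2_nonpos hxs hsz.le hz) (hq.det2_nonpos (by omega) hsz hz)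
    (hq.det2_nonneg (hxs.trans_lt hsz) hz (by omega) (Or.inr (by omega)))
    (hq.det2_nonneg (hxs.trans_lt hsz) hz (by omega) (Or.inl (Nat.zero_le x)))

lemma exists_isNoncrossingMatching_le_dist {n : ℕ} {c : Pt} {r V : ℝ}
    (hq : IsCCWChain (2 * n) q) (hcirc : ∀ k, dist (q k) c = r)
    (hinj : Set.InjOn q (Set.Iio (2 * n)))
    (hedge : ∀ x, ∃ t < n, V ≤ dist (q (x + t)) (q (x + t + 1)))
    (hlast : V ≤ dist (q (2 * n - 1)) (q 0)) :
    ∃ σ, IsNoncrossingMatching (range (2 * n)) σ ∧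
      ∀ x < 2 * n, V ≤ dist (q x) (q (σ x)) := by
  obtain ⟨σ, hσ, hheavy⟩ := exists_isNoncrossingMatching_of_forall_exists_lt
    (P := fun s => V ≤ dist (q s) (q (s + 1))) hedge
  have key : ∀ x < 2 * n, x < σ x → V ≤ dist (q x) (q (σ x)) := fun x hx hxσ => by
    obtain ⟨s, hxs, hsσ, hs⟩ := hheavy x hx hxσ
    have hσx := mem_range.mp (hσ.mapsTo x (mem_range.mpr hx))
    exact hq.le_dist_of_edges hcirc hlast hxs hsσ hσx hs (hinj.ne hx hσx hxσ.ne)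
  refine ⟨σ, hσ, fun x hx => ?_⟩
  have hx' := mem_range.mpr hx
  rcases lt_or_gt_of_ne (hσ.ne_self x hx') with h | h
  · have := key (σ x) (mem_range.mp (hσ.mapsTo x hx')) (by rwa [hσ.involutive x hx'])
    rwa [hσ.involutive x hx', dist_comm] at this
  · exact key x hx h

end IsCCWChain

section Rotation

variable {N : ℕ}

lemma ZMod.val_add_natCast_sub (a : ZMod N) {x : ℕ} (hx : x < N) : (a + x - a).val = x := by
  rw [add_sub_cancel_left, ZMod.val_natCast_of_lt hx]

lemma ZMod.eq_of_add_natCast_eq (a : ZMod N) {x y : ℕ} (hx : x < N) (hy : y < N)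
    (h : a + (x : ZMod N) = a + y) : x = y := by
  rw [← ZMod.val_add_natCast_sub a hx, h, ZMod.val_add_natCast_sub a hy]

variable [NeZero N]

lemma ZMod.add_natCast_val_sub (a i : ZMod N) : a + ((i - a).val : ZMod N) = i := by
  rw [ZMod.natCast_zmod_val]; ring

variable {p : ZMod N → Pt}

lemma IsNCM.isNoncrossingMatching_rotate {σ : ZMod N → ZMod N} (hσ : IsNCM N p σ) (a : ZMod N)
    (hq : IsCCWChain N (fun k => p (a + k))) :
    IsNoncrossingMatching (range N) (fun x => (σ (a + x) - a).val) := by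
  obtain ⟨hinv, hne, hdisj⟩ := hσ
  have hback : ∀ x : ℕ, a + (((σ (a + x) - a).val : ℕ) : ZMod N) = σ (a + x) := fun x =>
    ZMod.add_natCast_val_sub a _
  refine ⟨fun x _ => mem_range.mpr (ZMod.val_lt _), fun x hx => ?_, fun x _ h => ?_,
    fun x hx y hy hxy hyx => ?_⟩
  · rw [hback, hinv, ZMod.val_add_natCast_sub a (mem_range.mp hx)]
  · exact hne (a + x) (by rw [← hback, h])
  · have hx' := mem_range.mp hx
    have hy' := mem_range.mp hy
    have hτx : (σ (a + x) - a).val < N := ZMod.val_lt _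
    have hτy : (σ (a + y) - a).val < N := ZMod.val_lt _
    have hki : a + (y : ZMod N) ≠ a + x := fun h =>
      hxy.ne' (ZMod.eq_of_add_natCast_eq a hy' hx' h)
    have hkσ : a + (y : ZMod N) ≠ σ (a + x) := fun h =>
      hyx.ne (ZMod.eq_of_add_natCast_eq a hy' hτx (h.trans (hback x).symm))
    have hempty := hdisj _ _ hki hkσ
    have h₁ : (σ (a + y) - a).val ≠ x := fun h =>
      hkσ (by rw [← hinv (a + y), ← hback y, h])
    have h₂ : (σ (a + y) - a).val ≠ (σ (a + x) - a).val := fun h =>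
      hki (by rw [← hinv (a + y), ← hback y, h, hback x, hinv])
    -- otherwise the chords at `a + x` and `a + y` would cross
    by_contra hout
    rcases (by omega : (σ (a + y) - a).val < x ∨ (σ (a + x) - a).val < (σ (a + y) - a).val)
      with h | h
    · have := hq.segment_inter_nonempty h hxy hyx hτx
      simp only [hback] at this
      rw [segment_symm, Set.inter_comm, hempty] at this
      exact Set.not_nonempty_empty this
    · have := hq.segment_inter_nonempty hxy hyx h hτy
      simp only [hback] at this
      rw [hempty] at this
      exact Set.not_nonempty_empty this

lemma isNCM_of_isNoncrossingMatching {σ : ℕ → ℕ} (hσ : IsNoncrossingMatching (range N) σ)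
    (a : ZMod N) (hq : IsCCWChain N (fun k => p (a + k))) :
    IsNCM N p (fun i => a + σ (i - a).val) := by
  have hv : ∀ i : ZMod N, (i - a).val ∈ range N := fun i => mem_range.mpr (ZMod.val_lt _)
  have hσv : ∀ i, (a + (σ (i - a).val : ZMod N) - a).val = σ (i - a).val := fun i =>
    ZMod.val_add_natCast_sub a (mem_range.mp (hσ.mapsTo _ (hv i)))
  refine ⟨fun i => ?_, fun i h => ?_, fun i k hki hkσ => ?_⟩
  · dsimp only
    rw [hσv, hσ.involutive _ (hv i), ZMod.add_natCast_val_sub]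
  · refine hσ.ne_self _ (hv i) ?_
    dsimp only at h
    rw [← hσv i, h]
  · have hyx : (k - a).val ≠ (i - a).val := fun h => hki (by
      rw [← ZMod.add_natCast_val_sub a k, h, ZMod.add_natCast_val_sub])
    have hyσ : (k - a).val ≠ σ (i - a).val := fun h => hkσ (by
      rw [← ZMod.add_natCast_val_sub a k, h])
    have := hq.segment_inter_eq_empty_of_isNoncrossingMatching hσ (mem_range.mp (hv i))
      (mem_range.mp (hv k)) hyx hyσ
    simpa only [ZMod.add_natCast_val_sub] using this

lemma IsNCM.exists_boundary_edge {n : ℕ} [NeZero n] {p : ZMod (2 * n) → Pt}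
    {σ : ZMod (2 * n) → ZMod (2 * n)} (hσ : IsNCM (2 * n) p σ) (j : ZMod (2 * n))
    (hq : IsCCWChain (2 * n) (fun k => p (j + k))) : ∃ s < n, σ (j + s) = j + s + 1 := by
  obtain ⟨s, hs, hσs⟩ := (hσ.isNoncrossingMatching_rotate j hq).exists_lt_succ_eq
    (Nat.pos_of_ne_zero (NeZero.ne n))
  refine ⟨s, hs, ?_⟩
  rw [← ZMod.add_natCast_val_sub j (σ (j + s)), hσs]
  push_cast
  ring

end Rotation

lemma exists_isNCM_forall_le_dist {n : ℕ} [NeZero n] {p : ZMod (2 * n) → Pt}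
    (hccw : OnCircleCCW (2 * n) p) {V : ℝ}
    (hV : ∀ j : ZMod (2 * n), ∃ t < n, V ≤ dist (p (j + t)) (p (j + t + 1))) :
    ∃ σ, IsNCM (2 * n) p σ ∧ ∀ i, V ≤ dist (p i) (p (σ i)) := by
  obtain ⟨⟨c, r, -, hcirc⟩, hinj, hp⟩ := hccw
  obtain ⟨t₀, -, h₀⟩ := hV 0
  -- start just after a long boundary edge, so that the wrap-around edge `(2n - 1, 0)` is long
  set a : ZMod (2 * n) := t₀ + 1
  have hq := isCCWChain_rotate hp a
  obtain ⟨σ, hσ, hle⟩ := hq.exists_isNoncrossingMatching_le_dist (fun k => hcirc _)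
    (fun x hx z hz h => ZMod.eq_of_add_natCast_eq a hx hz (hinj h))
    (fun x => by
      obtain ⟨t, ht, h⟩ := hV (a + x)
      exact ⟨t, ht, by push_cast; simpa only [add_assoc] using h⟩)
    (by
      have : ((2 * n - 1 : ℕ) : ZMod (2 * n)) = -1 := by
        rw [Nat.cast_sub (Nat.one_le_iff_ne_zero.mpr (NeZero.ne _)), Nat.cast_one,
          ZMod.natCast_self, zero_sub]
      simpa [a, this] using h₀)
  refine ⟨_, isNCM_of_isNoncrossingMatching hσ a hq, fun i => ?_⟩
  simpa only [ZMod.add_natCast_val_sub] using hle _ (ZMod.val_lt (i - a))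

/-- For `2n` distinct points on a common circle in counterclockwise order, the
maximum over all perfect non-crossing matchings of the minimum edge length equals the minimum
over `j` of the maximum length of the `n` consecutive boundary edges starting at `j`. -/
theorem maxmin_eq_min_sliding_window_max (n : ℕ) (hn : 0 < n) (p : ZMod (2 * n) → Pt)
    (hccw : OnCircleCCW (2 * n) p) :
    IsGreatest {val : ℝ | ∃ σ, IsNCM (2 * n) p σ ∧ val = ⨅ i, dist (p i) (p (σ i))}
      (⨅ j : ZMod (2 * n), ⨆ k : Fin n,
        dist (p (j + ((k : ℕ) : ZMod (2 * n)))) (p (j + ((k : ℕ) : ZMod (2 * n)) + 1))) := by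
  have : NeZero n := ⟨hn.ne'⟩
  have : Nonempty (Fin n) := ⟨⟨0, hn⟩⟩
  set w : ZMod (2 * n) → Fin n → ℝ := fun j k =>
    dist (p (j + ((k : ℕ) : ZMod (2 * n)))) (p (j + ((k : ℕ) : ZMod (2 * n)) + 1))
  have hle : ∀ σ, IsNCM (2 * n) p σ → ⨅ i, dist (p i) (p (σ i)) ≤ ⨅ j, ⨆ k, w j k :=
    fun σ hσ => le_ciInf fun j => by
      obtain ⟨s, hs, hσs⟩ := hσ.exists_boundary_edge j (isCCWChain_rotate hccw.2.2 j)
      calc ⨅ i, dist (p i) (p (σ i)) ≤ dist (p (j + s)) (p (σ (j + s))) :=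
            ciInf_le (Set.finite_range _).bddBelow _
        _ = w j ⟨s, hs⟩ := by rw [hσs]
        _ ≤ ⨆ k, w j k := le_ciSup (Set.finite_range _).bddAbove _
  obtain ⟨σ, hσ, hV⟩ := exists_isNCM_forall_le_dist hccw fun j => by
    obtain ⟨k, hk⟩ := exists_eq_ciSup_of_finite (f := w j)
    exact ⟨k, k.isLt, (ciInf_le (Set.finite_range _).bddBelow j).trans_eq hk.symm⟩
  exact ⟨⟨σ, hσ, le_antisymm (le_ciInf hV) (hle σ hσ)⟩,
    fun _ ⟨σ', hσ', hv⟩ => hv ▸ hle σ' hσ'⟩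
end
end

section
/- Let p_0, p_1, …, p_{2n−1} be 2n distinct points on a common circle in counterclockwise order. Then there exists a perfect non-crossing matching of the points consisting only of boundary edges whose maximum edge length is at most the maximum edge length of every perfect non-crossing matching of the points. -/
noncomputable section

/-!
Place the points at angles `0 = θ₀ < θ₁ < ⋯ < θ_{2n-1} < 2π` on the circle of radius `r`, so that
the chord from `p a` to `p b` has length `2 r sin ((θ_b - θ_a) / 2)`. The two boundary matchings
pair `2i` with `2i + 1`, resp. `2i + 1` with `2i + 2`; let `{k, k + 1}` (`k` even) and `{m, m + 1}`
(`m` odd) be their longest edges and take the matching whose longest edge is the shorter one. In any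
perfect matching the arc `k + 1, …, m` has an odd number of points, so one of them is matched to a
point outside it. That chord separates the edges `{k, k + 1}` and `{m, m + 1}`, and since `sin` is
concave on `[0, π]` it is at least as long as the shorter of the two.
-/

open Complex ComplexConjugate
open scoped Real

def IsCCWOrdered (N : ℕ) (p : ZMod N → Pt) : Prop :=
  ∀ i j k : ZMod N, i.val < j.val → j.val < k.val → 0 < det2 (p j - p i) (p k - p i)

lemma Complex.im_conj_exp_sub_one_mul_exp_sub_one (a b : ℝ) :
    (conj (exp (a * I) - 1) * (exp (b * I) - 1)).im
      = 4 * Real.sin (a / 2) * Real.sin (b / 2) * Real.sin ((b - a) / 2) := by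
  obtain ⟨x, rfl⟩ : ∃ x, a = 2 * x := ⟨a / 2, by ring⟩
  obtain ⟨y, rfl⟩ : ∃ y, b = 2 * y := ⟨b / 2, by ring⟩
  simp only [mul_im, conj_re, conj_im, sub_re, sub_im, one_re, one_im, exp_ofReal_mul_I_re,
    exp_ofReal_mul_I_im]
  rw [show (2 * y - 2 * x) / 2 = y - x by ring, mul_div_cancel_left₀ _ two_ne_zero,
    mul_div_cancel_left₀ _ two_ne_zero, Real.sin_two_mul, Real.sin_two_mul, Real.cos_two_mul,
    Real.cos_two_mul, Real.sin_sub]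
  linear_combination (4 * Real.sin y * Real.cos y) * Real.sin_sq_add_cos_sq x
    - (4 * Real.sin x * Real.cos x) * Real.sin_sq_add_cos_sq y

lemma Complex.norm_exp_mul_I_sub_exp_mul_I (a b : ℝ) :
    ‖exp (b * I) - exp (a * I)‖ = 2 * |Real.sin ((b - a) / 2)| := by
  have : exp (b * I) - exp (a * I) = exp (a * I) * (exp (I * (b - a : ℝ)) - 1) := by
    rw [mul_sub, mul_one, ← exp_add]; push_cast; ring_nf
  rw [this, norm_mul, norm_exp_ofReal_mul_I, one_mul, norm_exp_I_mul_ofReal_sub_one, norm_mul,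
    Real.norm_eq_abs, Real.norm_eq_abs, abs_two]

def toComplex : Pt ≃ₗᵢ[ℝ] ℂ := Complex.orthonormalBasisOneI.repr.symm

lemma det2_eq_im_conj_mul (u v : Pt) : det2 u v = (conj (toComplex u) * toComplex v).im := by
  simp only [det2, toComplex, orthonormalBasisOneI_repr_symm_apply, map_add, map_mul, conj_ofReal,
    conj_I, mul_im, add_re, add_im, mul_re, ofReal_re, ofReal_im, I_re, I_im, neg_re, neg_im]
  ring

lemma det2_sub_sub_rotate (u v w : Pt) : det2 (v - u) (w - u) = det2 (w - v) (u - v) := by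
  simp only [det2, PiLp.sub_apply]
  ring

lemma segment_inter_segment_eq_empty_of_det2_pos {a b x y : Pt} (hx : 0 < det2 (b - a) (x - a))
    (hy : 0 < det2 (b - a) (y - a)) : segment ℝ a b ∩ segment ℝ x y = ∅ := by
  have hlin : IsLinearMap ℝ (det2 (b - a)) :=
    ⟨fun u v ↦ by simp only [det2, PiLp.add_apply]; ring,
      fun s u ↦ by simp only [det2, PiLp.smul_apply, smul_eq_mul]; ring⟩
  have hsub (z : Pt) : det2 (b - a) (z - a) = det2 (b - a) z - det2 (b - a) a := by
    simp only [det2, PiLp.sub_apply]; ring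
  have hab : ∀ ⦃z⦄, z ∈ segment ℝ a b → det2 (b - a) z ≤ det2 (b - a) a :=
    (convex_halfSpace_le hlin _).segment_subset
      (show det2 (b - a) a ≤ det2 (b - a) a from le_rfl)
      (show det2 (b - a) b ≤ det2 (b - a) a from
        le_of_eq (by simp only [det2, PiLp.sub_apply]; ring))
  have hxy : segment ℝ x y ⊆ {z | det2 (b - a) a < det2 (b - a) z} :=
    (convex_halfSpace_gt hlin _).segment_subset (by rw [hsub] at hx; exact sub_pos.mp hx)
      (by rw [hsub] at hy; exact sub_pos.mp hy)
  exact Set.eq_empty_of_forall_notMem fun z ⟨hz₁, hz₂⟩ ↦ (hab hz₁).not_gt (hxy hz₂)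

section BoundaryEdges

variable {N : ℕ} [NeZero N] {p : ZMod N → Pt} (hccw : IsCCWOrdered N p)
include hccw

lemma det2_boundary_pos {u x : ZMod N} (hxu : x ≠ u) (hxu' : x ≠ u + 1) :
    0 < det2 (p (u + 1) - p u) (p x - p u) := by
  have hval : x.val ≠ u.val := fun h ↦ hxu (ZMod.val_injective N h)
  have hval' : x.val ≠ (u + 1).val := fun h ↦ hxu' (ZMod.val_injective N h)
  have hsucc : (u + 1).val = (u.val + 1) % N := by
    rw [ZMod.val_add, ZMod.val_one_eq_one_mod, Nat.add_mod_mod]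
  have hlt := ZMod.val_lt x
  have hlt' := ZMod.val_lt u
  rcases (show u.val + 1 < N ∨ u.val + 1 = N by omega) with hu | hu
  · rw [Nat.mod_eq_of_lt hu] at hsucc
    rcases lt_or_gt_of_ne hval with h | h
    · rw [← det2_sub_sub_rotate]
      exact hccw x u (u + 1) h (by omega)
    · exact hccw u (u + 1) x (by omega) (by omega)
  · rw [hu, Nat.mod_self] at hsucc
    rw [det2_sub_sub_rotate]
    exact hccw (u + 1) x u (by omega) (by omega)

lemma boundary_segment_inter_eq_empty {u v : ZMod N} (huv : u ≠ v) (hv : v ≠ u + 1)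
    (hu : u ≠ v + 1) : segment ℝ (p u) (p (u + 1)) ∩ segment ℝ (p v) (p (v + 1)) = ∅ :=
  segment_inter_segment_eq_empty_of_det2_pos (det2_boundary_pos hccw huv.symm hv)
    (det2_boundary_pos hccw (Ne.symm hu) (by simpa using huv.symm))

end BoundaryEdges

lemma Real.min_sin_le_sin {α β s : ℝ} (hα : 0 ≤ α) (hβ : 0 ≤ β) (hαs : α ≤ s) (hsβ : s + β ≤ π) :
    min (Real.sin α) (Real.sin β) ≤ Real.sin s := by
  rcases le_or_gt s (π / 2) with hs | hs
  · exact min_le_of_left_le <| Real.sin_le_sin_of_le_of_le_pi_div_two (by linarith) hs hαs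
  · refine min_le_of_right_le ?_
    rw [← Real.sin_pi_sub s]
    exact Real.sin_le_sin_of_le_of_le_pi_div_two (by linarith) (by linarith) (by linarith)

/-- `θ t` is the angular position of `q t` on a circle of radius `r`, lifted to `ℝ` so that it
increases by `2π` over each period `N`. -/
structure IsAngularLift (N : ℕ) (r : ℝ) (q : ℕ → Pt) (θ : ℕ → ℝ) : Prop where
  monotone : Monotone θ
  add_period (t : ℕ) : θ (t + N) = θ t + 2 * π
  dist_eq {a b : ℕ} (hab : a ≤ b) (hba : b ≤ a + N) :
    dist (q a) (q b) = 2 * r * Real.sin ((θ b - θ a) / 2)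

namespace IsAngularLift

variable {N : ℕ} {r : ℝ} {q : ℕ → Pt} {θ : ℕ → ℝ}

lemma comp_add_right (h : IsAngularLift N r q θ) (s : ℕ) :
    IsAngularLift N r (fun t ↦ q (t + s)) (fun t ↦ θ (t + s)) where
  monotone _ _ hab := h.monotone (by omega)
  add_period t := by simpa only [Nat.add_right_comm] using h.add_period (t + s)
  dist_eq hab hba := h.dist_eq (by omega) (by omega)

lemma min_dist_le_dist (h : IsAngularLift N r q θ) (hr : 0 ≤ r) {a k b m : ℕ} (hak : a ≤ k)
    (hkb : k + 1 ≤ b) (hbm : b ≤ m) (hma : m + 1 ≤ a + N) :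
    min (dist (q k) (q (k + 1))) (dist (q m) (q (m + 1))) ≤ dist (q a) (q b) := by
  rw [h.dist_eq (by omega) (by omega), h.dist_eq (by omega) (by omega),
    h.dist_eq (by omega) (by omega), ← mul_min_of_nonneg _ _ (by positivity)]
  gcongr
  have := h.monotone hak
  have := h.monotone hkb
  have := h.monotone hbm
  have := h.monotone hma
  have := h.add_period a
  have := h.monotone (Nat.le_succ k)
  have := h.monotone (Nat.le_succ m)
  -- the half arc `s` of the chord satisfies `α ≤ s ≤ π - β` for the half arcs `α`, `β` of the edges
  exact Real.min_sin_le_sin (by linarith) (by linarith) (by linarith) (by linarith)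

end IsAngularLift

section CircleAngle

variable {N : ℕ} (p : ZMod N → Pt) (c : Pt)

def circleAngle (i : ZMod N) : ℝ :=
  toIcoMod Real.two_pi_pos 0 (arg (toComplex (p i - c) / toComplex (p 0 - c)))

lemma circleAngle_mem_Ico (i : ZMod N) : circleAngle p c i ∈ Set.Ico 0 (2 * π) :=
  toIcoMod_mem_Ico' Real.two_pi_pos _

def circleAngleLift (t : ℕ) : ℝ := 2 * π * (t / N : ℕ) + circleAngle p c t

lemma circleAngleLift_add_period [NeZero N] (t : ℕ) :
    circleAngleLift p c (t + N) = circleAngleLift p c t + 2 * π := by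
  simp only [circleAngleLift, Nat.add_div_right _ (Nat.pos_of_neZero N), Nat.cast_add,
    ZMod.natCast_self, add_zero, Nat.cast_one]
  ring

variable {p c} {r : ℝ} (hc : ∀ i, dist (p i) c = r)
include hc

lemma norm_toComplex_sub_center (i : ZMod N) : ‖toComplex (p i - c)‖ = r := by
  rw [LinearIsometryEquiv.norm_map, ← dist_eq_norm, hc]

variable (hr : 0 < r)
include hr

lemma toComplex_sub_center_ne_zero (i : ZMod N) : toComplex (p i - c) ≠ 0 := by
  rw [← norm_ne_zero_iff, norm_toComplex_sub_center hc]
  exact hr.ne'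

lemma toComplex_sub_center_eq (i : ZMod N) :
    toComplex (p i - c) = toComplex (p 0 - c) * exp (circleAngle p c i * I) := by
  set w := toComplex (p i - c) / toComplex (p 0 - c)
  have hw : ‖w‖ = 1 := by
    rw [norm_div, norm_toComplex_sub_center hc, norm_toComplex_sub_center hc,
      div_self hr.ne']
  obtain ⟨k, hk⟩ : ∃ k : ℤ, arg w = circleAngle p c i + k * (2 * π) :=
    ⟨_, sub_eq_iff_eq_add'.mp (self_sub_toIcoMod_eq_mul Real.two_pi_pos 0 (arg w))⟩
  have hexp : exp (arg w * I) = exp (circleAngle p c i * I) := by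
    rw [hk]; push_cast; rw [add_mul, exp_add, mul_assoc, exp_int_mul_two_pi_mul_I, mul_one]
  rw [← hexp, ← one_mul (exp _), ← ofReal_one, ← hw, norm_mul_exp_arg_mul_I,
    mul_div_cancel₀ _ (toComplex_sub_center_ne_zero hc hr 0)]

lemma circleAngle_zero : circleAngle p c 0 = 0 := by
  rw [circleAngle, div_self (toComplex_sub_center_ne_zero hc hr 0), arg_one, toIcoMod_eq_self]
  simp [Real.pi_pos]

lemma dist_eq_two_mul_abs_sin_circleAngle (i j : ZMod N) :
    dist (p i) (p j) = 2 * r * |Real.sin ((circleAngle p c j - circleAngle p c i) / 2)| := by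
  rw [dist_comm, dist_eq_norm, ← sub_sub_sub_cancel_right (p j) (p i) c, ← toComplex.norm_map,
    map_sub, toComplex_sub_center_eq hc hr i, toComplex_sub_center_eq hc hr j, ← mul_sub, norm_mul,
    norm_toComplex_sub_center hc, norm_exp_mul_I_sub_exp_mul_I]
  ring

lemma det2_sub_zero_eq_sin_circleAngle (i j : ZMod N) :
    det2 (p i - p 0) (p j - p 0) = r ^ 2 * (4 * Real.sin (circleAngle p c i / 2) *
      Real.sin (circleAngle p c j / 2) *
        Real.sin ((circleAngle p c j - circleAngle p c i) / 2)) := by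
  have hsub (k : ZMod N) :
      toComplex (p k - p 0) = toComplex (p 0 - c) * (exp (circleAngle p c k * I) - 1) := by
    rw [← sub_sub_sub_cancel_right (p k) (p 0) c, map_sub, toComplex_sub_center_eq hc hr k,
      mul_sub, mul_one]
  rw [det2_eq_im_conj_mul, hsub, hsub, map_mul, mul_mul_mul_comm, ← normSq_eq_conj_mul_self,
    normSq_eq_norm_sq, norm_toComplex_sub_center hc, im_ofReal_mul,
    im_conj_exp_sub_one_mul_exp_sub_one]

variable (hinj : Function.Injective p)
include hinj

lemma circleAngle_pos {i : ZMod N} (hi : i ≠ 0) : 0 < circleAngle p c i := by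
  refine (circleAngle_mem_Ico p c i).1.lt_of_ne fun h ↦ hi (hinj ?_)
  have := toComplex_sub_center_eq hc hr i
  rw [← h, ofReal_zero, zero_mul, exp_zero, mul_one] at this
  simpa using toComplex.injective this

variable (hccw : IsCCWOrdered N p)
include hccw

lemma circleAngle_lt_circleAngle {i j : ZMod N} (hij : i.val < j.val) :
    circleAngle p c i < circleAngle p c j := by
  have hj := circleAngle_pos hc hr hinj (i := j) (by rintro rfl; simp at hij)
  rcases eq_or_ne i 0 with rfl | hi
  · rwa [circleAngle_zero hc hr]
  have hi' := circleAngle_pos hc hr hinj hi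
  have hlt_i := (circleAngle_mem_Ico p c i).2
  have hlt_j := (circleAngle_mem_Ico p c j).2
  have hdet := hccw 0 i j (by simpa [ZMod.val_pos] using hi) hij
  rw [det2_sub_zero_eq_sin_circleAngle hc hr] at hdet
  have hsin_i : 0 < Real.sin (circleAngle p c i / 2) :=
    Real.sin_pos_of_pos_of_lt_pi (by linarith) (by linarith)
  have hsin_j : 0 < Real.sin (circleAngle p c j / 2) :=
    Real.sin_pos_of_pos_of_lt_pi (by linarith) (by linarith)
  have hsin : 0 < Real.sin ((circleAngle p c j - circleAngle p c i) / 2) :=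
    pos_of_mul_pos_right (pos_of_mul_pos_right hdet (by positivity)) (by positivity)
  by_contra! hle
  exact hsin.not_ge (Real.sin_nonpos_of_nonpos_of_neg_pi_le (by linarith) (by linarith))

lemma monotone_circleAngleLift : Monotone (circleAngleLift p c) := by
  refine monotone_nat_of_le_succ fun t ↦ ?_
  by_cases hdvd : N ∣ t + 1
  · have hlt := (circleAngle_mem_Ico p c t).2
    rw [circleAngleLift, circleAngleLift, Nat.succ_div_of_dvd hdvd,
      (ZMod.natCast_eq_zero_iff _ _).mpr hdvd, circleAngle_zero hc hr]
    push_cast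
    linarith
  · have hmod : (t + 1) % N = t % N + 1 := by
      have := Nat.div_add_mod t N
      have := Nat.div_add_mod (t + 1) N
      rw [Nat.succ_div_of_not_dvd hdvd] at this
      omega
    have := circleAngle_lt_circleAngle hc hr hinj hccw (i := (t : ZMod N)) (j := (t + 1 : ℕ))
      (by rw [ZMod.val_natCast, ZMod.val_natCast, hmod]; omega)
    rw [circleAngleLift, circleAngleLift, Nat.succ_div_of_not_dvd hdvd]
    linarith

lemma isAngularLift_circleAngleLift [NeZero N] :
    IsAngularLift N r (fun t : ℕ ↦ p t) (circleAngleLift p c) := by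
  have hmono := monotone_circleAngleLift hc hr hinj hccw
  refine ⟨hmono, circleAngleLift_add_period p c, fun {a b} hab hba ↦ ?_⟩
  have hsin : Real.sin ((circleAngleLift p c b - circleAngleLift p c a) / 2)
      = (-1) ^ (b / N - a / N) * Real.sin ((circleAngle p c b - circleAngle p c a) / 2) := by
    rw [← Real.sin_add_nat_mul_pi, Nat.cast_sub (Nat.div_le_div_right hab), circleAngleLift,
      circleAngleLift]
    congr 1
    ring
  have hnonneg : 0 ≤ Real.sin ((circleAngleLift p c b - circleAngleLift p c a) / 2) := by
    have := hmono hab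
    have := hmono hba
    rw [circleAngleLift_add_period] at this
    exact Real.sin_nonneg_of_nonneg_of_le_pi (by linarith) (by linarith)
  rw [dist_eq_two_mul_abs_sin_circleAngle hc hr, ← abs_of_nonneg hnonneg, hsin, abs_mul, abs_pow,
    abs_neg, abs_one, one_pow, one_mul]

end CircleAngle

lemma Function.Involutive.exists_mem_apply_notMem_of_odd_card {α : Type*} {σ : α → α}
    (hσ : Function.Involutive σ) (hfix : ∀ x, σ x ≠ x) {s : Finset α} (hs : Odd s.card) :
    ∃ x ∈ s, σ x ∉ s := by
  by_contra! hmem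
  have hprod : ∏ _x ∈ s, (-1 : ℤ) = 1 :=
    Finset.prod_involution (fun x _ ↦ σ x) (fun _ _ ↦ by norm_num) (fun x _ _ ↦ hfix x) hmem
      (fun x _ ↦ hσ x)
  rw [Finset.prod_const, hs.neg_one_pow] at hprod
  norm_num at hprod

/-- The arc `k + 1, …, m` has an odd number of points, so the fixed-point free involution `σ`
pairs one of them with a point outside it, and that chord separates the boundary edges at `k`
and at `m`. -/
lemma exists_min_dist_le_dist_of_odd {N : ℕ} [NeZero N] {p : ZMod N → Pt} {r : ℝ} {θ : ℕ → ℝ}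
    (hθ : IsAngularLift N r (fun t : ℕ ↦ p t) θ) (hr : 0 ≤ r) {k m : ZMod N}
    (hkm : Odd (m - k).val) {σ : ZMod N → ZMod N} (hσ : Function.Involutive σ)
    (hfix : ∀ i, σ i ≠ i) :
    ∃ x, min (dist (p k) (p (k + 1))) (dist (p m) (p (m + 1))) ≤ dist (p x) (p (σ x)) := by
  set d := (m - k).val
  have hdN : d < N := ZMod.val_lt _
  have hcard : ((Finset.range d).image fun t : ℕ ↦ k + 1 + t).card = d := by
    rw [Finset.card_image_of_injOn, Finset.card_range]
    intro t ht t' ht' h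
    have := congrArg ZMod.val (add_left_cancel (a := k + 1) h)
    simp only [Finset.coe_range, Set.mem_Iio] at ht ht'
    rwa [ZMod.val_cast_of_lt (ht.trans hdN), ZMod.val_cast_of_lt (ht'.trans hdN)] at this
  obtain ⟨x, hx, hσx⟩ := hσ.exists_mem_apply_notMem_of_odd_card hfix (hcard ▸ hkm)
  obtain ⟨t, ht, rfl⟩ := Finset.mem_image.mp hx
  rw [Finset.mem_range] at ht
  set u := (σ (k + 1 + t) - (k + 1)).val
  have hu : d ≤ u := by
    by_contra! hu
    exact hσx (Finset.mem_image.mpr ⟨u, Finset.mem_range.mpr hu, by simp [u]⟩)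
  have huN : u < N := ZMod.val_lt _
  refine ⟨k + 1 + t, ?_⟩
  have := (hθ.comp_add_right k.val).min_dist_le_dist hr (a := 1 + t) (k := d) (b := 1 + u)
    (m := N) (by omega) (by omega) (by omega) (by omega)
  have hcast (j : ℕ) : ((j + k.val : ℕ) : ZMod N) = k + j := by
    push_cast [ZMod.natCast_zmod_val]; ring
  simp only [hcast, d, u, Nat.cast_add, Nat.cast_one, ZMod.natCast_self, ZMod.natCast_zmod_val,
    ← add_assoc, add_sub_cancel, add_zero] at this
  rwa [min_comm]

lemma ZMod.add_one_eq_iff_ne (x y : ZMod 2) : x + 1 = y ↔ x ≠ y := by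
  decide +revert

section BoundaryMatching

variable {n : ℕ}

abbrev parity (n : ℕ) : ZMod (2 * n) →+* ZMod 2 := ZMod.castHom (dvd_mul_right 2 n) (ZMod 2)

lemma odd_val_sub_of_parity [NeZero (2 * n)] {k m : ZMod (2 * n)} (hk : parity n k = 0)
    (hm : parity n m = 1) : Odd (m - k).val := by
  rw [← ZMod.natCast_eq_one_iff_odd, ZMod.natCast_val]
  change parity n (m - k) = 1
  rw [map_sub, hk, hm, sub_zero]

def boundaryMatching (n : ℕ) (e : ZMod 2) (i : ZMod (2 * n)) : ZMod (2 * n) :=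
  if parity n i = e then i + 1 else i - 1

lemma boundaryMatching_eq_add_one_or_sub_one (e : ZMod 2) (i : ZMod (2 * n)) :
    boundaryMatching n e i = i + 1 ∨ boundaryMatching n e i = i - 1 := by
  unfold boundaryMatching
  split_ifs <;> simp

lemma parity_boundaryMatching (e : ZMod 2) (i : ZMod (2 * n)) :
    parity n (boundaryMatching n e i) = parity n i + 1 := by
  rcases boundaryMatching_eq_add_one_or_sub_one e i with h | h <;> rw [h]
  · rw [map_add, map_one]
  · rw [map_sub, map_one, CharTwo.sub_eq_add]

lemma boundaryMatching_ne_self (e : ZMod 2) (i : ZMod (2 * n)) : boundaryMatching n e i ≠ i :=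
  fun h ↦ (ZMod.add_one_eq_iff_ne _ _).mp (h ▸ parity_boundaryMatching e i).symm rfl

lemma exists_boundaryMatching_edge (e : ZMod 2) (i : ZMod (2 * n)) :
    ∃ k, parity n k = e ∧
      (i = k ∧ boundaryMatching n e i = k + 1 ∨ i = k + 1 ∧ boundaryMatching n e i = k) := by
  by_cases h : parity n i = e
  · exact ⟨i, h, .inl ⟨rfl, if_pos h⟩⟩
  · refine ⟨i - 1, ?_, .inr ⟨by ring, if_neg h⟩⟩
    rw [map_sub, map_one, CharTwo.sub_eq_add, ZMod.add_one_eq_iff_ne]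
    exact h

lemma boundaryMatching_involutive (e : ZMod 2) : Function.Involutive (boundaryMatching n e) := by
  intro i
  obtain ⟨k, hk, ⟨rfl, h⟩ | ⟨rfl, h⟩⟩ := exists_boundaryMatching_edge e i
  · have : parity n (i + 1) ≠ e := by
      rw [map_add, map_one, ne_eq, ZMod.add_one_eq_iff_ne, hk, not_not]
    rw [h, boundaryMatching, if_neg this, add_sub_cancel_right]
  · rw [h, boundaryMatching, if_pos hk]

variable {p : ZMod (2 * n) → Pt}

lemma segment_boundaryMatching {e : ZMod 2} {i k : ZMod (2 * n)}
    (h : i = k ∧ boundaryMatching n e i = k + 1 ∨ i = k + 1 ∧ boundaryMatching n e i = k) :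
    segment ℝ (p i) (p (boundaryMatching n e i)) = segment ℝ (p k) (p (k + 1)) := by
  rcases h with ⟨rfl, h⟩ | ⟨rfl, h⟩ <;> rw [h]
  exact segment_symm ℝ _ _

variable [NeZero (2 * n)]

lemma isNCM_boundaryMatching (hccw : IsCCWOrdered (2 * n) p) (e : ZMod 2) :
    IsNCM (2 * n) p (boundaryMatching n e) := by
  refine ⟨boundaryMatching_involutive e, boundaryMatching_ne_self e, fun i j hji hjσ ↦ ?_⟩
  obtain ⟨k, hk, hik⟩ := exists_boundaryMatching_edge e i
  obtain ⟨l, hl, hjl⟩ := exists_boundaryMatching_edge e j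
  rw [segment_boundaryMatching hik, segment_boundaryMatching hjl]
  have hkl : k ≠ l := by
    rintro rfl
    rcases hik with ⟨rfl, h⟩ | ⟨rfl, h⟩ <;> rcases hjl with ⟨rfl, -⟩ | ⟨rfl, -⟩ <;> simp_all
  have hpar {a b : ZMod (2 * n)} (hab : parity n a = parity n b) : a ≠ b + 1 := by
    rintro rfl
    rw [map_add, map_one, ZMod.add_one_eq_iff_ne] at hab
    exact hab rfl
  exact boundary_segment_inter_eq_empty hccw hkl (hpar (hl.trans hk.symm))
    (hpar (hk.trans hl.symm))

lemma exists_iSup_dist_boundaryMatching_le (p : ZMod (2 * n) → Pt) (e : ZMod 2) :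
    ∃ k, parity n k = e ∧
      ⨆ i, dist (p i) (p (boundaryMatching n e i)) ≤ dist (p k) (p (k + 1)) := by
  obtain ⟨i, hi⟩ := Finite.exists_max fun i ↦ dist (p i) (p (boundaryMatching n e i))
  obtain ⟨k, hk, hik⟩ := exists_boundaryMatching_edge e i
  refine ⟨k, hk, ciSup_le fun j ↦ (hi j).trans (le_of_eq ?_)⟩
  rcases hik with ⟨rfl, h⟩ | ⟨rfl, h⟩ <;> rw [h]
  exact dist_comm _ _

end BoundaryMatching

/-- For `2n` distinct points on a common circle in counterclockwise order,
there exists a perfect non-crossing matching consisting only of boundary edges whose maximum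
edge length is at most the maximum edge length of every perfect non-crossing matching. -/
theorem minmax_attained_by_boundary_matching (n : ℕ) (hn : 0 < n) (p : ZMod (2 * n) → Pt)
    (hccw : OnCircleCCW (2 * n) p) :
    ∃ σ, IsNCM (2 * n) p σ ∧ (∀ i, σ i = i + 1 ∨ σ i = i - 1) ∧
      ∀ σ', IsNCM (2 * n) p σ' →
        (⨆ i, dist (p i) (p (σ i))) ≤ ⨆ i, dist (p i) (p (σ' i)) := by
  obtain ⟨⟨c, r, hr, hc⟩, hinj, hccw⟩ := hccw
  have : NeZero (2 * n) := ⟨by omega⟩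
  let M e := ⨆ i, dist (p i) (p (boundaryMatching n e i))
  obtain ⟨k, hk, hMk⟩ := exists_iSup_dist_boundaryMatching_le p 0
  obtain ⟨m, hm, hMm⟩ := exists_iSup_dist_boundaryMatching_le p 1
  obtain ⟨e, he⟩ : ∃ e, M e = min (M 0) (M 1) :=
    (min_choice (M 0) (M 1)).elim (fun h ↦ ⟨0, h.symm⟩) (fun h ↦ ⟨1, h.symm⟩)
  refine ⟨boundaryMatching n e, isNCM_boundaryMatching hccw e,
    boundaryMatching_eq_add_one_or_sub_one e, fun σ' hσ' ↦ ?_⟩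
  obtain ⟨x, hx⟩ := exists_min_dist_le_dist_of_odd (isAngularLift_circleAngleLift hc hr hinj hccw)
    hr.le (odd_val_sub_of_parity hk hm) hσ'.1 hσ'.2.1
  calc M e = min (M 0) (M 1) := he
    _ ≤ min (dist (p k) (p (k + 1))) (dist (p m) (p (m + 1))) := min_le_min hMk hMm
    _ ≤ dist (p x) (p (σ' x)) := hx
    _ ≤ ⨆ i, dist (p i) (p (σ' i)) :=
      le_ciSup (Set.finite_range fun i ↦ dist (p i) (p (σ' i))).bddAbove x
end
end

section
/- Let P = B ∪ R be a doubly collinear point set with |B| = |R| = n. For r ∈ R and b ∈ B, the edge {r,b} is feasible (contained in some bichromatic perfect non-crossing matching of P) if and only if |P ∩ (r,x)| ≤ |P ∩ (b→x→)| and |P ∩ (b,x)| ≤ |P ∩ (r→x→)|, where (p,x) denotes the open segment between p and x, and (p→x→) denotes the open half-line of the line containing p that starts at p and contains x. -/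
/-!
Write red points as `x + s • v` and blue points as `x + t • u` (`s, t ≠ 0`), rescaling `u, v` so
that `r` and `b` have coordinate `1`. Two edges `(s, t)` and `(s', t')` with distinct endpoints
meet exactly when `s, s'` have the same sign, `t, t'` have the same sign, and `|s| < |s'|` while
`|t'| < |t|`, or vice versa. So in a non-crossing matching containing `{r, b}` a red point of
`(r, x)` is matched to a blue point of coordinate `< 1`, and a blue point of `(b, x)` to a red
point of coordinate `< 1`; injectivity gives the two inequalities. Conversely, if they hold one can
always split off an edge that crosses no edge at all, whatever the rest of the matching: two
outermost points of their sign classes if some point lies beyond `r` or `b`, two innermost ones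
otherwise. The inequalities survive the removal, and induction on `n` finishes.
-/

noncomputable section

open scoped InnerProductSpace

/-- The open half-line starting at `x` with direction `u`. -/
def halfLine (x u : Pt) : Set Pt := {y | ∃ t : ℝ, 0 < t ∧ y = x + t • u}

/-- The open half-line starting at `a` and passing through `c` (it contains `c`). -/
def rayThrough (a c : Pt) : Set Pt := {y | ∃ s : ℝ, 0 < s ∧ y = a + s • (c - a)}

/-- `σ` encodes a bichromatic perfect non-crossing matching of the blue points `B` and the red
points `R`: it restricts to a bijection from `R` onto `B`, and the closed segments induced by
two distinct edges are disjoint. -/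
def IsBM (B R : Finset Pt) (σ : Pt → Pt) : Prop :=
  Set.BijOn σ (↑R) (↑B) ∧
  (∀ r ∈ R, ∀ r' ∈ R, r ≠ r' →
    segment ℝ r (σ r) ∩ segment ℝ r' (σ r') = ∅)

/-- The bichromatic edge `{r, b}` is feasible: some bichromatic perfect non-crossing matching
of `B ∪ R` contains it. -/
def BFeasible (B R : Finset Pt) (r b : Pt) : Prop :=
  ∃ σ, IsBM B R σ ∧ σ r = b

open Finset

/-- The edge from the red point of coordinate `s` to the blue point of coordinate `t` crosses the
edge `(s', t')`, the first one having the red endpoint nearer to `x`. -/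
def EdgesCross (s t s' t' : ℝ) : Prop := 0 < s * s' ∧ 0 < t * t' ∧ |s| < |s'| ∧ |t'| < |t|

lemma not_edgesCross_self (s t : ℝ) : ¬EdgesCross s t s t := fun h => lt_irrefl _ h.2.2.1

lemma exists_params_of_lt {s t s' t' : ℝ} (hs : 0 < s) (ht' : 0 < t') (hss : s < s')
    (htt : t' < t) :
    ∃ μ ∈ Set.Icc (0 : ℝ) 1, ∃ ν ∈ Set.Icc (0 : ℝ) 1,
      μ * t = ν * t' ∧ (1 - μ) * s = (1 - ν) * s' := by
  have hD : 0 < t * s' - t' * s := by nlinarith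
  refine ⟨t' * (s' - s) / (t * s' - t' * s), ⟨?_, ?_⟩,
    t * (s' - s) / (t * s' - t' * s), ⟨?_, ?_⟩, ?_, ?_⟩
  · exact div_nonneg (mul_nonneg ht'.le (by linarith)) hD.le
  · rw [div_le_one hD]; nlinarith
  · exact div_nonneg (mul_nonneg (by linarith) (by linarith)) hD.le
  · rw [div_le_one hD]; nlinarith
  · field_simp
  · rw [div_eq_mul_inv, div_eq_mul_inv]
    linear_combination (s' - s) * mul_inv_cancel₀ hD.ne'

lemma lt_of_params {s t s' t' μ ν : ℝ} (hs : 0 < s) (ht : 0 < t) (hss : s ≠ s') (htt : t ≠ t')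
    (hμ : μ ∈ Set.Icc (0 : ℝ) 1) (hν : ν ∈ Set.Icc (0 : ℝ) 1)
    (e₁ : μ * t = ν * t') (e₂ : (1 - μ) * s = (1 - ν) * s') (h : s < s') : t' < t := by
  obtain ⟨hμ0, hμ1⟩ := hμ
  obtain ⟨hν0, hν1⟩ := hν
  by_contra! h'
  obtain rfl : ν = μ := le_antisymm (by nlinarith) (by nlinarith)
  obtain rfl : ν = 0 := by
    have : ν * (t - t') = 0 := by linear_combination e₁
    exact (mul_eq_zero.1 this).resolve_right (sub_ne_zero.2 htt)
  exact hss (by linarith)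

lemma eq_zero_of_mul_eq_mul_of_mul_neg {a b s s' : ℝ} (ha : 0 ≤ a) (hb : 0 ≤ b)
    (h : s * s' < 0) (e : a * s = b * s') : a = 0 ∧ b = 0 := by
  have hs : s ≠ 0 := by rintro rfl; simp at h
  have hs' : s' ≠ 0 := by rintro rfl; simp at h
  have hb' : b * s' = 0 := by nlinarith [sq_nonneg (b * s'), mul_nonneg ha hb]
  exact ⟨(mul_eq_zero.1 (e.trans hb')).resolve_right hs, (mul_eq_zero.1 hb').resolve_right hs'⟩

lemma mul_eq_mul_iff_abs {t t' μ ν : ℝ} (h : 0 < t * t') :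
    μ * t = ν * t' ↔ μ * |t| = ν * |t'| := by
  rcases mul_pos_iff.1 h with ⟨h₁, h₂⟩ | ⟨h₁, h₂⟩
  · rw [abs_of_pos h₁, abs_of_pos h₂]
  · rw [abs_of_neg h₁, abs_of_neg h₂]
    constructor <;> intro <;> linarith

lemma exists_params_of_edgesCross {s t s' t' : ℝ} (h : EdgesCross s t s' t') :
    ∃ μ ∈ Set.Icc (0 : ℝ) 1, ∃ ν ∈ Set.Icc (0 : ℝ) 1,
      μ * t = ν * t' ∧ (1 - μ) * s = (1 - ν) * s' := by
  obtain ⟨hS, hT, hs, ht⟩ := h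
  obtain ⟨μ, hμ, ν, hν, e₁, e₂⟩ := exists_params_of_lt (abs_pos.2 (left_ne_zero_of_mul hS.ne'))
    (abs_pos.2 (right_ne_zero_of_mul hT.ne')) hs ht
  exact ⟨μ, hμ, ν, hν, (mul_eq_mul_iff_abs hT).2 e₁, (mul_eq_mul_iff_abs hS).2 e₂⟩

/-- In the coordinates along the two lines, the segment from `s` (red) to `t` (blue) is
`{(μ t, (1 - μ) s) | μ ∈ [0, 1]}`, so the left side says that the segments of two edges meet. -/
lemma exists_params_iff_edgesCross {s t s' t' : ℝ} (hs : s ≠ 0) (ht : t ≠ 0) (hs' : s' ≠ 0)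
    (ht' : t' ≠ 0) (hss : s ≠ s') (htt : t ≠ t') :
    (∃ μ ∈ Set.Icc (0 : ℝ) 1, ∃ ν ∈ Set.Icc (0 : ℝ) 1,
        μ * t = ν * t' ∧ (1 - μ) * s = (1 - ν) * s') ↔
      EdgesCross s t s' t' ∨ EdgesCross s' t' s t := by
  refine ⟨fun ⟨μ, hμ, ν, hν, e₁, e₂⟩ => ?_, ?_⟩
  · have hS : 0 < s * s' := by
      by_contra! hS
      obtain ⟨hμ1, hν1⟩ := eq_zero_of_mul_eq_mul_of_mul_neg (sub_nonneg.2 hμ.2)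
        (sub_nonneg.2 hν.2) (hS.lt_of_ne (mul_ne_zero hs hs')) e₂
      obtain rfl : μ = 1 := by linarith
      obtain rfl : ν = 1 := by linarith
      exact htt (by simpa using e₁)
    have hT : 0 < t * t' := by
      by_contra! hT
      obtain ⟨rfl, rfl⟩ := eq_zero_of_mul_eq_mul_of_mul_neg hμ.1 hν.1
        (hT.lt_of_ne (mul_ne_zero ht ht')) e₁
      exact hss (by simpa using e₂)
    rw [mul_eq_mul_iff_abs hT] at e₁
    rw [mul_eq_mul_iff_abs hS] at e₂
    have habs : |s| ≠ |s'| := fun h => hss <| by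
      rcases abs_eq_abs.1 h with h | h
      · exact h
      · rw [h] at hS; nlinarith [mul_self_pos.2 hs']
    have htt' : |t| ≠ |t'| := fun h => htt <| by
      rcases abs_eq_abs.1 h with h | h
      · exact h
      · rw [h] at hT; nlinarith [mul_self_pos.2 ht']
    rcases habs.lt_or_gt with h | h
    · exact .inl ⟨hS, hT, h,
        lt_of_params (abs_pos.2 hs) (abs_pos.2 ht) habs htt' hμ hν e₁ e₂ h⟩
    · exact .inr ⟨by linarith, by linarith, h,
        lt_of_params (abs_pos.2 hs') (abs_pos.2 ht') habs.symm htt'.symm hν hμ e₁.symm e₂.symm h⟩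
  · rintro (h | h)
    · exact exists_params_of_edgesCross h
    · obtain ⟨μ, hμ, ν, hν, e₁, e₂⟩ := exists_params_of_edgesCross h
      exact ⟨ν, hν, μ, hμ, e₁.symm, e₂.symm⟩

section Lines

variable {E : Type*} [AddCommGroup E] [Module ℝ E] {x u v : E}

lemma mem_segment_iff_params {s t : ℝ} {z : E} :
    z ∈ segment ℝ (x + s • v) (x + t • u) ↔
      ∃ μ ∈ Set.Icc (0 : ℝ) 1, x + ((μ * t) • u + ((1 - μ) * s) • v) = z := by
  rw [segment_eq_image]
  refine exists_congr fun μ => and_congr_right fun _ => ?_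
  dsimp only
  rw [show (1 - μ) • (x + s • v) + μ • (x + t • u) = x + ((μ * t) • u + ((1 - μ) * s) • v) by
    module]

lemma segment_inter_nonempty_iff (hind : LinearIndependent ℝ ![u, v]) {p q p' q' : E}
    {s t s' t' : ℝ} (hp : p = x + s • v) (hq : q = x + t • u) (hp' : p' = x + s' • v)
    (hq' : q' = x + t' • u) (hs : s ≠ 0) (ht : t ≠ 0) (hs' : s' ≠ 0) (ht' : t' ≠ 0)
    (hss : s ≠ s') (htt : t ≠ t') :
    (segment ℝ p q ∩ segment ℝ p' q').Nonempty ↔ EdgesCross s t s' t' ∨ EdgesCross s' t' s t := by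
  subst hp hq hp' hq'
  rw [← exists_params_iff_edgesCross hs ht hs' ht' hss htt]
  constructor
  · rintro ⟨z, hz, hz'⟩
    obtain ⟨μ, hμ, rfl⟩ := mem_segment_iff_params.1 hz
    obtain ⟨ν, hν, h⟩ := mem_segment_iff_params.1 hz'
    obtain ⟨e₁, e₂⟩ := hind.eq_of_pair (add_left_cancel h)
    exact ⟨μ, hμ, ν, hν, e₁.symm, e₂.symm⟩
  · rintro ⟨μ, hμ, ν, hν, e₁, e₂⟩
    exact ⟨_, mem_segment_iff_params.2 ⟨μ, hμ, rfl⟩,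
      mem_segment_iff_params.2 ⟨ν, hν, by rw [e₁, e₂]⟩⟩

lemma add_smul_eq_add_smul_iff (hind : LinearIndependent ℝ ![u, v]) {a b : ℝ} :
    x + a • v = x + b • u ↔ a = 0 ∧ b = 0 := by
  rw [add_right_inj]
  constructor
  · intro h
    exact (hind.eq_zero_of_pair' h.symm).symm
  · rintro ⟨rfl, rfl⟩
    simp

lemma mem_openSegment_add_self {p : E} :
    p ∈ openSegment ℝ (x + v) x ↔ ∃ a ∈ Set.Ioo (0 : ℝ) 1, x + a • v = p := by
  rw [openSegment_symm, openSegment_eq_image', add_sub_cancel_left]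
  rfl

lemma exists_ne_zero_eq_add_smul_smul {S : Finset E}
    (hS : ∀ q ∈ S, ∃ t : ℝ, t ≠ 0 ∧ q = x + t • u) {c : ℝ} (hc : c ≠ 0) :
    ∀ q ∈ S, ∃ t : ℝ, t ≠ 0 ∧ q = x + t • (c • u) := fun q hq => by
  obtain ⟨t, ht, rfl⟩ := hS q hq
  exact ⟨t / c, div_ne_zero ht hc, by rw [smul_smul, div_mul_cancel₀ t hc]⟩

end Lines

section Matchings

variable {α : Type*} {R B S : Finset α} {cr cb c : α → ℝ} {σ : α → α} {r b : α}

/-- For `c` the coordinate along the line of `r`, with `c r = 1`, `innerPart S c` and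
`belowOne S c` are the points of `S` on `(r, x)` and on `(r→x→)`. -/
def innerPart (S : Finset α) (c : α → ℝ) : Finset α := S.filter fun p => 0 < c p ∧ c p < 1

def belowOne (S : Finset α) (c : α → ℝ) : Finset α := S.filter fun p => c p < 1

def aboveOne (S : Finset α) (c : α → ℝ) : Finset α := S.filter fun p => 1 < c p

def IsNoncrossingMatching_s11 (R B : Finset α) (cr cb : α → ℝ) (σ : α → α) : Prop :=
  Set.BijOn σ R B ∧ ∀ p ∈ R, ∀ p' ∈ R, ¬EdgesCross (cr p) (cb (σ p)) (cr p') (cb (σ p'))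

lemma IsNoncrossingMatching_s11.lt_one_iff (hσ : IsNoncrossingMatching_s11 R B cr cb σ)
    (hRinj : Set.InjOn cr R) (hBinj : Set.InjOn cb B) (hr : r ∈ R) (hr1 : cr r = 1)
    (hb1 : cb (σ r) = 1) {p : α} (hp : p ∈ R) (hpr : p ≠ r) (h₀ : 0 < cr p)
    (h₀' : 0 < cb (σ p)) : cr p < 1 ↔ cb (σ p) < 1 := by
  have h₁ : cr p ≠ 1 := fun h => hpr (hRinj hp hr (h.trans hr1.symm))
  have h₁' : cb (σ p) ≠ 1 := fun h => hpr <| hσ.1.injOn hp hr <|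
    hBinj (hσ.1.mapsTo hp) (hσ.1.mapsTo hr) (h.trans hb1.symm)
  have c₁ := hσ.2 p hp r hr
  have c₂ := hσ.2 r hr p hp
  simp only [EdgesCross, hr1, hb1, mul_one, one_mul, abs_one, abs_of_pos h₀, abs_of_pos h₀', h₀,
    h₀', true_and, not_and, not_lt] at c₁ c₂
  exact ⟨fun h => (c₁ h).lt_of_ne h₁',
    fun h => (le_of_not_gt fun h' => (c₂ h').not_gt h).lt_of_ne h₁⟩

lemma IsNoncrossingMatching_s11.card_le (hσ : IsNoncrossingMatching_s11 R B cr cb σ)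
    (hRinj : Set.InjOn cr R) (hBinj : Set.InjOn cb B) (hr : r ∈ R) (hr1 : cr r = 1)
    (hb1 : cb (σ r) = 1) :
    #(innerPart R cr) ≤ #(belowOne B cb) ∧ #(innerPart B cb) ≤ #(belowOne R cr) := by
  constructor
  · refine card_le_card_of_injOn σ (fun p hp => ?_)
      (hσ.1.injOn.mono (coe_subset.2 (filter_subset _ _)))
    obtain ⟨hpR, hp₀, hp₁⟩ := mem_filter.1 hp
    refine mem_filter.2 ⟨hσ.1.mapsTo hpR, ?_⟩
    rcases le_or_gt (cb (σ p)) 0 with h | h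
    · linarith
    · exact (hσ.lt_one_iff hRinj hBinj hr hr1 hb1 hpR (by rintro rfl; linarith) hp₀ h).1 hp₁
  · refine card_le_card_of_surjOn σ fun q hq => ?_
    obtain ⟨hqB, hq₀, hq₁⟩ := mem_filter.1 hq
    obtain ⟨p, hpR, rfl⟩ := hσ.1.surjOn hqB
    refine ⟨p, mem_filter.2 ⟨hpR, ?_⟩, rfl⟩
    rcases le_or_gt (cr p) 0 with h | h
    · linarith
    · exact (hσ.lt_one_iff hRinj hBinj hr hr1 hb1 hpR (by rintro rfl; linarith) h hq₀).2 hq₁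

def IsSafeEdge (R B : Finset α) (cr cb : α → ℝ) (p₀ q₀ : α) : Prop :=
  ∀ p ∈ R, ∀ q ∈ B,
    ¬EdgesCross (cr p₀) (cb q₀) (cr p) (cb q) ∧ ¬EdgesCross (cr p) (cb q) (cr p₀) (cb q₀)

lemma IsNoncrossingMatching_s11.update [DecidableEq α] {p₀ q₀ : α}
    (hσ : IsNoncrossingMatching_s11 (R.erase p₀) (B.erase q₀) cr cb σ) (hp₀ : p₀ ∈ R) (hq₀ : q₀ ∈ B)
    (hsafe : IsSafeEdge R B cr cb p₀ q₀) :
    IsNoncrossingMatching_s11 R B cr cb (Function.update σ p₀ q₀) := by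
  have hoff : ∀ p ∈ R.erase p₀, Function.update σ p₀ q₀ p = σ p :=
    fun p hp => Function.update_of_ne (ne_of_mem_erase hp) _ _
  have hmaps : ∀ p ∈ R, Function.update σ p₀ q₀ p ∈ B := by
    intro p hp
    rcases eq_or_ne p p₀ with rfl | hne
    · simpa using hq₀
    · rw [hoff p (mem_erase.2 ⟨hne, hp⟩)]
      exact mem_of_mem_erase (hσ.1.mapsTo (mem_erase.2 ⟨hne, hp⟩))
  constructor
  · have h := (hσ.1.congr fun p hp => (hoff p hp).symm).insert (a := p₀)
      (by simp [Function.update_self])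
    rwa [Function.update_self, ← coe_insert, ← coe_insert, insert_erase hp₀,
      insert_erase hq₀] at h
  · intro p hp p' hp'
    by_cases h : p = p₀ <;> by_cases h' : p' = p₀
    · subst h h'
      exact not_edgesCross_self _ _
    · subst h
      simpa [Function.update_of_ne h'] using (hsafe p' hp' _ (hmaps p' hp')).1
    · subst h'
      simpa [Function.update_of_ne h] using (hsafe p hp _ (hmaps p hp)).2
    · rw [hoff p (mem_erase.2 ⟨h, hp⟩), hoff p' (mem_erase.2 ⟨h', hp'⟩)]
      exact hσ.2 p (mem_erase.2 ⟨h, hp⟩) p' (mem_erase.2 ⟨h', hp'⟩)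

def IsOutermost (S : Finset α) (c : α → ℝ) (p₀ : α) : Prop :=
  ∀ p ∈ S, 0 < c p * c p₀ → |c p| ≤ |c p₀|

def IsInnermost (S : Finset α) (c : α → ℝ) (p₀ : α) : Prop :=
  ∀ p ∈ S, 0 < c p * c p₀ → |c p₀| ≤ |c p|

lemma IsOutermost.isSafeEdge {p₀ q₀ : α} (hp₀ : IsOutermost R cr p₀)
    (hq₀ : IsOutermost B cb q₀) :
    IsSafeEdge R B cr cb p₀ q₀ := fun p hp q hq =>
  ⟨fun h => (hp₀ p hp (by rw [mul_comm]; exact h.1)).not_gt h.2.2.1,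
    fun h => (hq₀ q hq h.2.1).not_gt h.2.2.2⟩

lemma IsInnermost.isSafeEdge {p₀ q₀ : α} (hp₀ : IsInnermost R cr p₀)
    (hq₀ : IsInnermost B cb q₀) :
    IsSafeEdge R B cr cb p₀ q₀ := fun p hp q hq =>
  ⟨fun h => (hq₀ q hq (by rw [mul_comm]; exact h.2.1)).not_gt h.2.2.2,
    fun h => (hp₀ p hp h.1).not_gt h.2.2.1⟩

lemma mul_pos_of_mul_pos_of_mul_pos {a b d : ℝ} (h₁ : 0 < a * b) (h₂ : 0 < b * d) : 0 < a * d :=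
  pos_of_mul_pos_left (by nlinarith [mul_pos h₁ h₂]) (mul_self_nonneg b)

lemma exists_isOutermost {w : α} (hw : w ∈ S) (hw₀ : c w ≠ 0) :
    ∃ p₀ ∈ S, 0 < c p₀ * c w ∧ |c w| ≤ |c p₀| ∧ IsOutermost S c p₀ := by
  obtain ⟨p₀, hp₀, hmax⟩ := (S.filter fun p => 0 < c p * c w).exists_max_image (|c ·|)
    ⟨w, mem_filter.2 ⟨hw, mul_self_pos.2 hw₀⟩⟩
  obtain ⟨hp₀S, hp₀w⟩ := mem_filter.1 hp₀
  refine ⟨p₀, hp₀S, hp₀w, hmax w (mem_filter.2 ⟨hw, mul_self_pos.2 hw₀⟩), fun p hp h => ?_⟩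
  exact hmax p (mem_filter.2 ⟨hp, mul_pos_of_mul_pos_of_mul_pos h hp₀w⟩)

lemma exists_isInnermost {w : α} (hw : w ∈ S) (hw₀ : c w ≠ 0) :
    ∃ p₀ ∈ S, 0 < c p₀ * c w ∧ |c p₀| ≤ |c w| ∧ IsInnermost S c p₀ := by
  obtain ⟨p₀, hp₀, hmin⟩ := (S.filter fun p => 0 < c p * c w).exists_min_image (|c ·|)
    ⟨w, mem_filter.2 ⟨hw, mul_self_pos.2 hw₀⟩⟩
  obtain ⟨hp₀S, hp₀w⟩ := mem_filter.1 hp₀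
  refine ⟨p₀, hp₀S, hp₀w, hmin w (mem_filter.2 ⟨hw, mul_self_pos.2 hw₀⟩), fun p hp h => ?_⟩
  exact hmin p (mem_filter.2 ⟨hp, mul_pos_of_mul_pos_of_mul_pos h hp₀w⟩)

lemma exists_isOutermost_of_one_lt {w : α} (hw : w ∈ S) (hw₁ : 1 < c w) :
    ∃ p₀ ∈ S, 1 < c p₀ ∧ IsOutermost S c p₀ := by
  obtain ⟨p₀, hp₀, hsign, habs, hout⟩ := exists_isOutermost hw (by positivity)
  have hp₀pos : 0 < c p₀ := pos_of_mul_pos_left hsign (by positivity)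
  rw [abs_of_pos (by positivity), abs_of_pos hp₀pos] at habs
  exact ⟨p₀, hp₀, by linarith, hout⟩

lemma exists_isOutermost_of_neg {w : α} (hw : w ∈ S) (hw₀ : c w < 0) :
    ∃ p₀ ∈ S, c p₀ < 0 ∧ IsOutermost S c p₀ := by
  obtain ⟨p₀, hp₀, hsign, -, hout⟩ := exists_isOutermost hw hw₀.ne
  exact ⟨p₀, hp₀, neg_of_mul_pos_left hsign hw₀.le, hout⟩

lemma exists_isInnermost_of_lt_one {w : α} (hw : w ∈ S) (hw₀ : c w ≠ 0) (hw₁ : c w < 1) :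
    ∃ p₀ ∈ S, c p₀ < 1 ∧ IsInnermost S c p₀ := by
  obtain ⟨p₀, hp₀, hsign, habs, hin⟩ := exists_isInnermost hw hw₀
  refine ⟨p₀, hp₀, ?_, hin⟩
  rcases mul_pos_iff.1 hsign with ⟨h, h'⟩ | ⟨h, -⟩
  · rw [abs_of_pos h, abs_of_pos h'] at habs
    linarith
  · linarith

lemma innerPart_subset_belowOne : innerPart S c ⊆ belowOne S c :=
  fun _ hp => mem_filter.2 ⟨(mem_filter.1 hp).1, (mem_filter.1 hp).2.2⟩

lemma card_eq_belowOne_add_aboveOne (hr : r ∈ S) (hr1 : c r = 1) (hinj : Set.InjOn c S) :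
    #S = #(belowOne S c) + 1 + #(aboveOne S c) := by
  classical
  have hsplit := card_filter_add_card_filter_not (s := S) (fun p => c p < 1)
  have hge : S.filter (fun p => ¬c p < 1) = insert r (aboveOne S c) := by
    ext p
    simp only [aboveOne, mem_insert, mem_filter, not_lt]
    constructor
    · rintro ⟨hp, h⟩
      rcases h.eq_or_lt with h | h
      · exact .inl (hinj hp hr (h.symm.trans hr1.symm))
      · exact .inr ⟨hp, h⟩
    · rintro (rfl | ⟨hp, h⟩)
      · exact ⟨hr, hr1.ge⟩
      · exact ⟨hp, h.le⟩
  rw [hge, card_insert_of_notMem (by simp [aboveOne, hr1])] at hsplit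
  rw [belowOne]
  omega

lemma filter_erase_of_not [DecidableEq α] {P : α → Prop} [DecidablePred P] {p : α} (h : ¬P p) :
    (S.erase p).filter P = S.filter P := by
  rw [filter_erase, erase_eq_of_notMem (by simp [h])]

lemma innerPart_erase_of_one_lt [DecidableEq α] {p : α} (h : 1 < c p) :
    innerPart (S.erase p) c = innerPart S c :=
  filter_erase_of_not fun h' => h.not_gt h'.2

lemma belowOne_erase_of_one_lt [DecidableEq α] {p : α} (h : 1 < c p) :
    belowOne (S.erase p) c = belowOne S c :=
  filter_erase_of_not h.not_gt

lemma card_belowOne_erase [DecidableEq α] {p : α} (hp : p ∈ S) (h : c p < 1) :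
    #(belowOne (S.erase p) c) + 1 = #(belowOne S c) := by
  rw [belowOne, filter_erase]
  exact card_erase_add_one (mem_filter.2 ⟨hp, h⟩)

lemma card_innerPart_erase_le [DecidableEq α] {p : α} :
    #(innerPart (S.erase p) c) ≤ #(innerPart S c) :=
  card_le_card (filter_subset_filter _ (erase_subset _ _))

lemma edgesCross_swap {s t s' t' : ℝ} : EdgesCross t s t' s' ↔ EdgesCross s' t' s t := by
  simp only [EdgesCross, mul_comm t, mul_comm s]
  tauto

lemma isSafeEdge_swap {p₀ q₀ : α} :
    IsSafeEdge B R cb cr q₀ p₀ ↔ IsSafeEdge R B cr cb p₀ q₀ := by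
  simp only [IsSafeEdge, edgesCross_swap]
  exact ⟨fun h p hp q hq => (h q hq p hp).symm, fun h q hq p hp => (h p hp q hq).symm⟩

lemma exists_neg_of_card_innerPart_lt (h₀ : ∀ p ∈ S, c p ≠ 0)
    (h : #(innerPart S c) < #(belowOne S c)) : ∃ p ∈ S, c p < 0 := by
  obtain ⟨p, hp, hp'⟩ := exists_mem_notMem_of_card_lt_card h
  obtain ⟨hpS, hp₁⟩ := mem_filter.1 hp
  exact ⟨p, hpS,
    (le_of_not_gt fun h₀' => hp' (mem_filter.2 ⟨hpS, h₀', hp₁⟩)).lt_of_ne (h₀ p hpS)⟩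

lemma exists_safeEdge_of_aboveOne_nonempty [DecidableEq α] (hB0 : ∀ q ∈ B, cb q ≠ 0)
    (hRinj : Set.InjOn cr R) (hBinj : Set.InjOn cb B) (hr : r ∈ R) (hb : b ∈ B) (hr1 : cr r = 1)
    (hb1 : cb b = 1) (hcard : #R = #B) (hA : (aboveOne R cr).Nonempty)
    (h₁ : #(innerPart R cr) ≤ #(belowOne B cb)) (h₂ : #(innerPart B cb) ≤ #(belowOne R cr)) :
    ∃ p₀ ∈ R, ∃ q₀ ∈ B, cr p₀ ≠ 1 ∧ cb q₀ ≠ 1 ∧ IsSafeEdge R B cr cb p₀ q₀ ∧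
      #(innerPart (R.erase p₀) cr) ≤ #(belowOne (B.erase q₀) cb) ∧
      #(innerPart (B.erase q₀) cb) ≤ #(belowOne (R.erase p₀) cr) := by
  obtain ⟨w, hw⟩ := hA
  obtain ⟨p₀, hp₀, hp₀1, hout⟩ :=
    exists_isOutermost_of_one_lt (mem_filter.1 hw).1 (mem_filter.1 hw).2
  refine ⟨p₀, hp₀, ?_⟩
  rw [innerPart_erase_of_one_lt hp₀1, belowOne_erase_of_one_lt hp₀1]
  rcases (aboveOne B cb).eq_empty_or_nonempty with hC | ⟨w', hw'⟩
  · -- no blue point beyond `b`: counting yields a negative blue point to pair with `p₀`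
    have eR := card_eq_belowOne_add_aboveOne hr hr1 hRinj
    have eB := card_eq_belowOne_add_aboveOne hb hb1 hBinj
    rw [hC, card_empty] at eB
    have hw₀ : 0 < #(aboveOne R cr) := card_pos.2 ⟨w, hw⟩
    have hR := card_le_card (innerPart_subset_belowOne (S := R) (c := cr))
    obtain ⟨q, hq, hq₀⟩ := exists_neg_of_card_innerPart_lt hB0 (by omega)
    obtain ⟨q₀, hq₀B, hq₀neg, hout'⟩ := exists_isOutermost_of_neg hq hq₀
    have hq₀' := card_belowOne_erase hq₀B (by linarith)
    exact ⟨q₀, hq₀B, hp₀1.ne', (hq₀neg.trans one_pos).ne, hout.isSafeEdge hout', by omega,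
      card_innerPart_erase_le.trans h₂⟩
  · obtain ⟨q₀, hq₀B, hq₀1, hout'⟩ :=
      exists_isOutermost_of_one_lt (mem_filter.1 hw').1 (mem_filter.1 hw').2
    refine ⟨q₀, hq₀B, ?_⟩
    rw [innerPart_erase_of_one_lt hq₀1, belowOne_erase_of_one_lt hq₀1]
    exact ⟨hp₀1.ne', hq₀1.ne', hout.isSafeEdge hout', h₁, h₂⟩

lemma exists_safeEdge [DecidableEq α] (hR0 : ∀ p ∈ R, cr p ≠ 0) (hB0 : ∀ q ∈ B, cb q ≠ 0)
    (hRinj : Set.InjOn cr R) (hBinj : Set.InjOn cb B) (hr : r ∈ R) (hb : b ∈ B) (hr1 : cr r = 1)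
    (hb1 : cb b = 1) (hcard : #R = #B) (hR : 1 < #R)
    (h₁ : #(innerPart R cr) ≤ #(belowOne B cb)) (h₂ : #(innerPart B cb) ≤ #(belowOne R cr)) :
    ∃ p₀ ∈ R, ∃ q₀ ∈ B, cr p₀ ≠ 1 ∧ cb q₀ ≠ 1 ∧ IsSafeEdge R B cr cb p₀ q₀ ∧
      #(innerPart (R.erase p₀) cr) ≤ #(belowOne (B.erase q₀) cb) ∧
      #(innerPart (B.erase q₀) cb) ≤ #(belowOne (R.erase p₀) cr) := by
  by_cases hA : (aboveOne R cr).Nonempty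
  · exact exists_safeEdge_of_aboveOne_nonempty hB0 hRinj hBinj hr hb hr1 hb1 hcard hA h₁ h₂
  by_cases hC : (aboveOne B cb).Nonempty
  · obtain ⟨q₀, hq₀, p₀, hp₀, hq₀1, hp₀1, hsafe, h₂', h₁'⟩ :=
      exists_safeEdge_of_aboveOne_nonempty hR0 hBinj hRinj hb hr hb1 hr1 hcard.symm hC h₂ h₁
    exact ⟨p₀, hp₀, q₀, hq₀, hp₀1, hq₀1, isSafeEdge_swap.1 hsafe, h₁', h₂'⟩
  -- nothing beyond `r` or `b`: both `belowOne` parts have `#R - 1` points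
  rw [not_nonempty_iff_eq_empty] at hA hC
  have eR := card_eq_belowOne_add_aboveOne hr hr1 hRinj
  have eB := card_eq_belowOne_add_aboveOne hb hb1 hBinj
  rw [hA, card_empty] at eR
  rw [hC, card_empty] at eB
  obtain ⟨w, hw⟩ : (belowOne R cr).Nonempty := card_pos.1 (by omega)
  obtain ⟨w', hw'⟩ : (belowOne B cb).Nonempty := card_pos.1 (by omega)
  obtain ⟨p₀, hp₀, hp₀1, hin⟩ := exists_isInnermost_of_lt_one (mem_filter.1 hw).1
    (hR0 _ (mem_filter.1 hw).1) (mem_filter.1 hw).2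
  obtain ⟨q₀, hq₀, hq₀1, hin'⟩ := exists_isInnermost_of_lt_one (mem_filter.1 hw').1
    (hB0 _ (mem_filter.1 hw').1) (mem_filter.1 hw').2
  have hR' := card_belowOne_erase hp₀ hp₀1
  have hB' := card_belowOne_erase hq₀ hq₀1
  have hRsub := card_le_card (innerPart_subset_belowOne (S := R.erase p₀) (c := cr))
  have hBsub := card_le_card (innerPart_subset_belowOne (S := B.erase q₀) (c := cb))
  exact ⟨p₀, hp₀, q₀, hq₀, hp₀1.ne, hq₀1.ne, hin.isSafeEdge hin', by omega, by omega⟩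

theorem exists_isNoncrossingMatching [DecidableEq α] (hR0 : ∀ p ∈ R, cr p ≠ 0)
    (hB0 : ∀ q ∈ B, cb q ≠ 0) (hRinj : Set.InjOn cr R) (hBinj : Set.InjOn cb B) (hr : r ∈ R)
    (hb : b ∈ B) (hr1 : cr r = 1) (hb1 : cb b = 1) (hcard : #R = #B)
    (h₁ : #(innerPart R cr) ≤ #(belowOne B cb)) (h₂ : #(innerPart B cb) ≤ #(belowOne R cr)) :
    ∃ σ, IsNoncrossingMatching_s11 R B cr cb σ ∧ σ r = b := by
  obtain ⟨n, hn⟩ : ∃ n, #R = n := ⟨_, rfl⟩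
  induction n generalizing R B with
  | zero => exact absurd hn (card_ne_zero_of_mem hr)
  | succ n ih =>
    rcases n.eq_zero_or_pos with rfl | hn'
    · obtain rfl : R = {r} :=
        eq_singleton_iff_unique_mem.2 ⟨hr, fun p hp => card_le_one.1 hn.le p hp r hr⟩
      obtain rfl : B = {b} :=
        eq_singleton_iff_unique_mem.2 ⟨hb, fun q hq => card_le_one.1 (hcard ▸ hn).le q hq b hb⟩
      refine ⟨fun _ => b, ⟨?_, fun p hp p' hp' => ?_⟩, rfl⟩
      · rw [coe_singleton, coe_singleton]
        exact Set.bijOn_singleton.2 rfl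
      · rw [mem_singleton] at hp hp'
        subst hp hp'
        exact not_edgesCross_self _ _
    obtain ⟨p₀, hp₀, q₀, hq₀, hp₀1, hq₀1, hsafe, h₁', h₂'⟩ :=
      exists_safeEdge hR0 hB0 hRinj hBinj hr hb hr1 hb1 hcard (by omega) h₁ h₂
    have hrp₀ : r ≠ p₀ := by rintro rfl; exact hp₀1 hr1
    have hbq₀ : b ≠ q₀ := by rintro rfl; exact hq₀1 hb1
    obtain ⟨σ, hσ, hσr⟩ := ih (fun p hp => hR0 p (mem_of_mem_erase hp))
      (fun q hq => hB0 q (mem_of_mem_erase hq)) (hRinj.mono (coe_subset.2 (erase_subset _ _)))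
      (hBinj.mono (coe_subset.2 (erase_subset _ _))) (mem_erase.2 ⟨hrp₀, hr⟩)
      (mem_erase.2 ⟨hbq₀, hb⟩) (by rw [card_erase_of_mem hp₀, card_erase_of_mem hq₀, hcard])
      h₁' h₂' (by rw [card_erase_of_mem hp₀, hn]; rfl)
    exact ⟨_, hσ.update hp₀ hq₀ hsafe, by rw [Function.update_of_ne hrp₀, hσr]⟩

theorem exists_isNoncrossingMatching_iff [DecidableEq α] (hR0 : ∀ p ∈ R, cr p ≠ 0)
    (hB0 : ∀ q ∈ B, cb q ≠ 0) (hRinj : Set.InjOn cr R) (hBinj : Set.InjOn cb B) (hr : r ∈ R)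
    (hb : b ∈ B) (hr1 : cr r = 1) (hb1 : cb b = 1) (hcard : #R = #B) :
    (∃ σ, IsNoncrossingMatching_s11 R B cr cb σ ∧ σ r = b) ↔
      #(innerPart R cr) ≤ #(belowOne B cb) ∧ #(innerPart B cb) ≤ #(belowOne R cr) :=
  ⟨fun ⟨_, hσ, hσr⟩ => hσ.card_le hRinj hBinj hr hr1 (hσr ▸ hb1),
    fun ⟨h₁, h₂⟩ => exists_isNoncrossingMatching hR0 hB0 hRinj hBinj hr hb hr1 hb1 hcard h₁ h₂⟩

end Matchings

lemma linearIndependent_of_det2_ne_zero {u v : Pt} (h : det2 u v ≠ 0) :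
    LinearIndependent ℝ ![u, v] := by
  refine LinearIndependent.pair_iff.2 fun s t hst => ?_
  have h₀ := congrArg (· 0) hst
  have h₁ := congrArg (· 1) hst
  simp only [PiLp.add_apply, PiLp.smul_apply, smul_eq_mul, PiLp.zero_apply] at h₀ h₁
  have hs : s * det2 u v = 0 := by unfold det2; linear_combination v 1 * h₀ - v 0 * h₁
  have ht : t * det2 u v = 0 := by unfold det2; linear_combination u 0 * h₁ - u 1 * h₀
  exact ⟨(mul_eq_zero.1 hs).resolve_right h, (mul_eq_zero.1 ht).resolve_right h⟩

section Configuration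

variable {x u v : Pt} {B R : Finset Pt} {cr cb : Pt → ℝ}

lemma isBM_iff (hind : LinearIndependent ℝ ![u, v]) (hR0 : ∀ p ∈ R, cr p ≠ 0)
    (hR : ∀ p ∈ R, p = x + cr p • v) (hB0 : ∀ q ∈ B, cb q ≠ 0) (hB : ∀ q ∈ B, q = x + cb q • u)
    {σ : Pt → Pt} : IsBM B R σ ↔ IsNoncrossingMatching_s11 R B cr cb σ := by
  refine and_congr_right fun hσ => ?_
  have key : ∀ p ∈ R, ∀ p' ∈ R, p ≠ p' →
      (segment ℝ p (σ p) ∩ segment ℝ p' (σ p') = ∅ ↔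
        ¬EdgesCross (cr p) (cb (σ p)) (cr p') (cb (σ p')) ∧
          ¬EdgesCross (cr p') (cb (σ p')) (cr p) (cb (σ p))) := by
    intro p hp p' hp' hne
    have hq := hσ.mapsTo hp
    have hq' := hσ.mapsTo hp'
    rw [← Set.not_nonempty_iff_eq_empty, segment_inter_nonempty_iff hind (hR p hp) (hB _ hq)
      (hR p' hp') (hB _ hq') (hR0 p hp) (hB0 _ hq) (hR0 p' hp') (hB0 _ hq'), not_or]
    · exact fun h => hne (by rw [hR p hp, hR p' hp', h])
    · exact fun h => hne (hσ.injOn hp hp' (by rw [hB _ hq, hB _ hq', h]))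
  constructor
  · intro h p hp p' hp'
    rcases eq_or_ne p p' with rfl | hne
    · exact not_edgesCross_self _ _
    · exact ((key p hp p' hp' hne).1 (h p hp p' hp' hne)).1
  · exact fun h p hp p' hp' hne => (key p hp p' hp' hne).2 ⟨h p hp p' hp', h p' hp' p hp⟩

lemma inter_openSegment_eq_innerPart (hind : LinearIndependent ℝ ![u, v])
    (hR : ∀ p ∈ R, p = x + cr p • v) (hB0 : ∀ q ∈ B, cb q ≠ 0) (hB : ∀ q ∈ B, q = x + cb q • u) :
    (↑B ∪ ↑R : Set Pt) ∩ openSegment ℝ (x + v) x = ↑(innerPart R cr) := by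
  ext p
  simp only [Set.mem_inter_iff, Set.mem_union, Finset.mem_coe, innerPart, Finset.coe_filter,
    Set.mem_ofPred_eq, mem_openSegment_add_self]
  constructor
  · rintro ⟨hp | hp, a, ha, hpa⟩
    · exact absurd ((add_smul_eq_add_smul_iff hind).1 (hpa.trans (hB p hp))).2 (hB0 p hp)
    · obtain rfl : a = cr p := smul_left_injective ℝ (hind.ne_zero 1)
        (add_left_cancel (hpa.trans (hR p hp)))
      exact ⟨hp, ha⟩
  · rintro ⟨hp, ha⟩
    exact ⟨.inr hp, cr p, ha, (hR p hp).symm⟩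

lemma mem_rayThrough_add_self {p : Pt} :
    p ∈ rayThrough (x + u) x ↔ ∃ a : ℝ, a < 1 ∧ x + a • u = p := by
  constructor
  · rintro ⟨s, hs, rfl⟩
    exact ⟨1 - s, by linarith, by module⟩
  · rintro ⟨a, ha, rfl⟩
    exact ⟨1 - a, by linarith, by module⟩

lemma inter_rayThrough_eq_belowOne (hind : LinearIndependent ℝ ![u, v])
    (hR0 : ∀ p ∈ R, cr p ≠ 0) (hR : ∀ p ∈ R, p = x + cr p • v) (hB : ∀ q ∈ B, q = x + cb q • u) :
    (↑B ∪ ↑R : Set Pt) ∩ rayThrough (x + u) x = ↑(belowOne B cb) := by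
  ext p
  simp only [Set.mem_inter_iff, Set.mem_union, Finset.mem_coe, belowOne, Finset.coe_filter,
    Set.mem_ofPred_eq, mem_rayThrough_add_self]
  constructor
  · rintro ⟨hp | hp, a, ha, hpa⟩
    · obtain rfl : a = cb p := smul_left_injective ℝ (hind.ne_zero 0)
        (add_left_cancel (hpa.trans (hB p hp)))
      exact ⟨hp, ha⟩
    · exact absurd ((add_smul_eq_add_smul_iff hind).1 (hR p hp ▸ hpa).symm).1 (hR0 p hp)
  · rintro ⟨hp, ha⟩
    exact ⟨.inl hp, cb p, ha, (hB p hp).symm⟩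

end Configuration

theorem bFeasible_add_add_iff {x u v : Pt} {B R : Finset Pt}
    (hind : LinearIndependent ℝ ![u, v]) (hB : ∀ q ∈ B, ∃ t : ℝ, t ≠ 0 ∧ q = x + t • u)
    (hR : ∀ p ∈ R, ∃ t : ℝ, t ≠ 0 ∧ p = x + t • v) (hcard : #R = #B) (hr : x + v ∈ R)
    (hb : x + u ∈ B) :
    BFeasible B R (x + v) (x + u) ↔
      (((↑B ∪ ↑R : Set Pt) ∩ openSegment ℝ (x + v) x).ncard ≤
          ((↑B ∪ ↑R : Set Pt) ∩ rayThrough (x + u) x).ncard ∧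
        ((↑B ∪ ↑R : Set Pt) ∩ openSegment ℝ (x + u) x).ncard ≤
          ((↑B ∪ ↑R : Set Pt) ∩ rayThrough (x + v) x).ncard) := by
  classical
  choose! cb hB0 hB using hB
  choose! cr hR0 hR using hR
  have hr1 : cr (x + v) = 1 := (smul_left_inj (hind.ne_zero 1 : v ≠ 0)).1 <| by
    rw [one_smul]; exact (add_left_cancel (hR _ hr)).symm
  have hb1 : cb (x + u) = 1 := (smul_left_inj (hind.ne_zero 0 : u ≠ 0)).1 <| by
    rw [one_smul]; exact (add_left_cancel (hB _ hb)).symm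
  have hRinj : Set.InjOn cr R := fun p hp p' hp' h => by rw [hR p hp, hR p' hp', h]
  have hBinj : Set.InjOn cb B := fun q hq q' hq' h => by rw [hB q hq, hB q' hq', h]
  have hbx : (↑B ∪ ↑R : Set Pt) ∩ openSegment ℝ (x + u) x = ↑(innerPart B cb) := by
    rw [Set.union_comm]
    exact inter_openSegment_eq_innerPart (LinearIndependent.pair_symm_iff.1 hind) hB hR0 hR
  have hrx : (↑B ∪ ↑R : Set Pt) ∩ rayThrough (x + v) x = ↑(belowOne R cr) := by
    rw [Set.union_comm]
    exact inter_rayThrough_eq_belowOne (LinearIndependent.pair_symm_iff.1 hind) hB0 hB hR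
  rw [inter_openSegment_eq_innerPart hind hR hB0 hB, inter_rayThrough_eq_belowOne hind hR0 hR hB,
    hbx, hrx, Set.ncard_coe_finset, Set.ncard_coe_finset, Set.ncard_coe_finset,
    Set.ncard_coe_finset, BFeasible]
  simp only [isBM_iff hind hR0 hR hB0 hB]
  exact exists_isNoncrossingMatching_iff hR0 hB0 hRinj hBinj hr hb hr1 hb1 hcard

theorem dc_feasibility_criterion_general (n : ℕ) (x u v : Pt)
    (hnp : det2 u v ≠ 0) (B R : Finset Pt)
    (hB : ∀ b ∈ B, ∃ t : ℝ, t ≠ 0 ∧ b = x + t • u)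
    (hR : ∀ r ∈ R, ∃ t : ℝ, t ≠ 0 ∧ r = x + t • v)
    (hcB : B.card = n) (hcR : R.card = n)
    (r b : Pt) (hr : r ∈ R) (hb : b ∈ B) :
    BFeasible B R r b ↔
      (((↑B ∪ ↑R : Set Pt) ∩ openSegment ℝ r x).ncard ≤
          ((↑B ∪ ↑R : Set Pt) ∩ rayThrough b x).ncard ∧
        ((↑B ∪ ↑R : Set Pt) ∩ openSegment ℝ b x).ncard ≤
          ((↑B ∪ ↑R : Set Pt) ∩ rayThrough r x).ncard) := by
  obtain ⟨tb, htb, rfl⟩ := hB b hb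
  obtain ⟨sr, hsr, rfl⟩ := hR r hr
  have hind : LinearIndependent ℝ ![tb • u, sr • v] :=
    (LinearIndependent.pair_smul_smul_iff htb.isUnit hsr.isUnit).2
      (linearIndependent_of_det2_ne_zero hnp)
  exact bFeasible_add_add_iff hind (exists_ne_zero_eq_add_smul_smul hB htb)
    (exists_ne_zero_eq_add_smul_smul hR hsr) (hcR.trans hcB.symm) hr hb

/-- Let `P = B ∪ R` be a doubly collinear point set (blue points on the line
through `x` with direction `u`, red points on the line through `x` with direction `v`, the two
lines being non-parallel), with `|B| = |R| = n`. An edge `{r, b}` is feasible iff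
`|P ∩ (r,x)| ≤ |P ∩ (b→x→)|` and `|P ∩ (b,x)| ≤ |P ∩ (r→x→)|`. -/
theorem dc_feasibility_criterion (n : ℕ) (x u v : Pt) (hu : u ≠ 0) (hv : v ≠ 0)
    (hnp : det2 u v ≠ 0) (B R : Finset Pt)
    (hB : ∀ b ∈ B, ∃ t : ℝ, t ≠ 0 ∧ b = x + t • u)
    (hR : ∀ r ∈ R, ∃ t : ℝ, t ≠ 0 ∧ r = x + t • v)
    (hcB : B.card = n) (hcR : R.card = n)
    (r b : Pt) (hr : r ∈ R) (hb : b ∈ B) :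
    BFeasible B R r b ↔
      (((↑B ∪ ↑R : Set Pt) ∩ openSegment ℝ r x).ncard ≤
          ((↑B ∪ ↑R : Set Pt) ∩ rayThrough b x).ncard ∧
        ((↑B ∪ ↑R : Set Pt) ∩ openSegment ℝ b x).ncard ≤
          ((↑B ∪ ↑R : Set Pt) ∩ rayThrough r x).ncard) :=
  dc_feasibility_criterion_general n x u v hnp B R hB hR hcB hcR r b hr hb
end
end

section
/- Let P = B ∪ R be a doubly collinear point set with |B| = |R| = n ≥ 1 that is one-sided, i.e., all points of R lie strictly on one side of the line l_B. Let r* be the red point farthest from x. Then in every bichromatic perfect non-crossing matching of P, the point matched to r* is an extremal blue point, i.e., a blue point b such that no point of B lies on the open half-line of l_B starting at b that does not contain x. -/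
/-!
Let `b = σ r*` and suppose a blue point `b'` lies beyond `b` on the blue line, so
`b' - x = L • (b - x)` with `L > 1`; let `r'` be its partner. One-sidedness puts `r'` on the same
side of `x` as `r*`, and farthestness gives `r' - x = β • (r* - x)` with `0 ≤ β ≤ 1`. In the
triangle `x, r*, b'` the segment `[r', b']` joins the side `[x, r*]` to the vertex `b'`, while
`[r*, b]` separates that vertex from the side; so the two edges cross.
-/

noncomputable section

open scoped InnerProductSpace

theorem segment_inter_segment_smul_nonempty {E : Type*} [AddCommGroup E] [Module ℝ E]
    (x y z : E) {β L : ℝ} (hβ₀ : 0 ≤ β) (hβ₁ : β ≤ 1) (hL : 1 < L) :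
    (segment ℝ (x + y) (x + z) ∩ segment ℝ (x + β • y) (x + L • z)).Nonempty := by
  have hLβ : 0 < L - β := by linarith
  set φ := (1 - β) / (L - β) with hφ
  have hφ₀ : 0 ≤ φ := div_nonneg (by linarith) hLβ.le
  have hφ₁ : φ ≤ 1 := (div_le_one hLβ).2 (by linarith)
  -- `φ` is the parameter of the crossing point on the second segment
  have hθ : (1 - φ) * β + φ * L = 1 := by rw [hφ]; field_simp; ring
  refine ⟨x + ((1 - φ) * β) • y + (φ * L) • z, ⟨(1 - φ) * β, φ * L, by positivity,
    by positivity, hθ, ?_⟩, ⟨1 - φ, φ, by linarith, hφ₀, by ring, ?_⟩⟩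
  · linear_combination (norm := module) hθ • x
  · module

theorem exists_mul_eq_of_mul_nonneg_of_abs_le {a b : ℝ} (hab : 0 ≤ a * b) (hle : |b| ≤ |a|) :
    ∃ β, 0 ≤ β ∧ β ≤ 1 ∧ b = β * a := by
  rcases eq_or_ne a 0 with rfl | ha
  · exact ⟨0, le_rfl, zero_le_one, by simpa using hle⟩
  refine ⟨b / a, ?_, ?_, (div_mul_cancel₀ b ha).symm⟩
  · have : b / a = a * b / a ^ 2 := by field_simp
    rw [this]; positivity
  · calc b / a ≤ |b / a| := le_abs_self _
      _ = |b| / |a| := abs_div b a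
      _ ≤ 1 := (div_le_one (abs_pos.2 ha)).2 hle

theorem det2_smul_right (u v : Pt) (t : ℝ) : det2 u (t • v) = t * det2 u v := by
  simp only [det2, PiLp.smul_apply, smul_eq_mul]; ring

theorem exists_eq_add_smul_of_det2_mul_pos_of_dist_le {x u v r r' : Pt} (hv : v ≠ 0) {t t' : ℝ}
    (hr : r = x + t • v) (hr' : r' = x + t' • v)
    (hside : 0 < det2 u (r - x) * det2 u (r' - x)) (hle : dist x r' ≤ dist x r) :
    ∃ β : ℝ, 0 ≤ β ∧ β ≤ 1 ∧ r' = x + β • (r - x) := by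
  subst hr hr'
  simp only [add_sub_cancel_left, det2_smul_right] at hside
  have htt' : 0 ≤ t * t' := by nlinarith [sq_nonneg (det2 u v)]
  have habs : |t'| ≤ |t| := by
    simpa [dist_self_add_right, norm_smul, norm_pos_iff.2 hv] using hle
  obtain ⟨β, hβ₀, hβ₁, rfl⟩ := exists_mul_eq_of_mul_nonneg_of_abs_le htt' habs
  exact ⟨β, hβ₀, hβ₁, by rw [add_sub_cancel_left, smul_smul]⟩

theorem exists_one_lt_eq_of_mem_rayThrough {x a b : Pt} (hb : b ∈ rayThrough a (a + (a - x))) :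
    ∃ L : ℝ, 1 < L ∧ b = x + L • (a - x) := by
  obtain ⟨s, hs, rfl⟩ := hb
  exact ⟨1 + s, by linarith, by module⟩

theorem osdc_farthest_red_matched_to_extremal_blue_general
    (x u v : Pt) (hu : u ≠ 0) (hv : v ≠ 0) (B R : Finset Pt)
    (hB : ∀ b ∈ B, ∃ t : ℝ, t ≠ 0 ∧ b = x + t • u)
    (hR : ∀ r ∈ R, ∃ t : ℝ, t ≠ 0 ∧ r = x + t • v)
    (honesided : (∀ r ∈ R, 0 < det2 u (r - x)) ∨ (∀ r ∈ R, det2 u (r - x) < 0))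
    (rstar : Pt) (hrstar : rstar ∈ R) (hfar : ∀ r ∈ R, dist x r ≤ dist x rstar)
    (σ : Pt → Pt) (hσ : IsBM B R σ) :
    σ rstar ∈ B ∧
      ∀ b' ∈ B, b' ∉ rayThrough (σ rstar) (σ rstar + (σ rstar - x)) := by
  obtain ⟨hbij, hdisj⟩ := hσ
  refine ⟨hbij.mapsTo hrstar, fun b' hb' hray => ?_⟩
  obtain ⟨r', hr', rfl⟩ := hbij.surjOn hb'
  obtain ⟨L, hL, hσr'⟩ := exists_one_lt_eq_of_mem_rayThrough hray
  have hne : r' ≠ rstar := by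
    rintro rfl
    obtain ⟨p, hp, hσp⟩ := hB _ (hbij.mapsTo hr')
    have : (L - 1) • p • u = 0 := by
      rw [hσp] at hσr'
      linear_combination (norm := module) -hσr'
    simp [sub_eq_zero, hL.ne', hp, hu] at this
  obtain ⟨t, -, ht⟩ := hR _ hrstar
  obtain ⟨t', -, ht'⟩ := hR _ hr'
  have hside : 0 < det2 u (rstar - x) * det2 u (r' - x) := by
    rcases honesided with h | h
    exacts [mul_pos (h _ hrstar) (h _ hr'), mul_pos_of_neg_of_neg (h _ hrstar) (h _ hr')]
  obtain ⟨β, hβ₀, hβ₁, hr'β⟩ :=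
    exists_eq_add_smul_of_det2_mul_pos_of_dist_le hv ht ht' hside (hfar r' hr')
  obtain ⟨z, hz⟩ := segment_inter_segment_smul_nonempty x (rstar - x) (σ rstar - x) hβ₀ hβ₁ hL
  rw [add_sub_cancel, add_sub_cancel, ← hr'β, ← hσr'] at hz
  exact (hdisj rstar hrstar r' hr' hne.symm).subset hz

/-- Let `P = B ∪ R` be a one-sided doubly collinear point set (all red points
strictly on one side of the blue line) with `|B| = |R| = n ≥ 1`, and let `r*` be the red point
farthest from `x`. Then in every bichromatic perfect non-crossing matching, the partner of `r*`
is an extremal blue point: a blue point such that no point of `B` lies on the open half-line of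
the blue line starting at it and not containing `x`. -/
theorem osdc_farthest_red_matched_to_extremal_blue (n : ℕ) (hn : 1 ≤ n)
    (x u v : Pt) (hu : u ≠ 0) (hv : v ≠ 0) (hnp : det2 u v ≠ 0) (B R : Finset Pt)
    (hB : ∀ b ∈ B, ∃ t : ℝ, t ≠ 0 ∧ b = x + t • u)
    (hR : ∀ r ∈ R, ∃ t : ℝ, t ≠ 0 ∧ r = x + t • v)
    (hcB : B.card = n) (hcR : R.card = n)
    (honesided : (∀ r ∈ R, 0 < det2 u (r - x)) ∨ (∀ r ∈ R, det2 u (r - x) < 0))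
    (rstar : Pt) (hrstar : rstar ∈ R) (hfar : ∀ r ∈ R, dist x r ≤ dist x rstar)
    (σ : Pt → Pt) (hσ : IsBM B R σ) :
    σ rstar ∈ B ∧
      ∀ b' ∈ B, b' ∉ rayThrough (σ rstar) (σ rstar + (σ rstar - x)) :=
  osdc_farthest_red_matched_to_extremal_blue_general x u v hu hv B R hB hR honesided rstar hrstar
    hfar σ hσ
end
end
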